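/- arXiv:2507.13592 — 9 statements merged into one kernel-verified Lean document; each statement's English description precedes it below -/
import Mathlib

section
/- Let G be a connected k-regular graph on n vertices and let U ⊆ V. Then for every v ∈ E_i (i ≥ 1), the vector I_U v satisfies (2D' − (a + b)J)(I_U v) = μ_i (I_U v) with μ_i = (a − b)(2λ_i + 1) − (a + b), and (2D' − (a + b)J)(I_U j) = μ_0 (I_U j) with μ_0 = (a − b)(2k − n + 1) − (a + b). In particular, the eigenvalues of 2D' − (a + b)J are μ_0, μ_1, …, μ_r with eigenspaces I_U E_0, I_U E_1, …, I_U E_r, and they coincide with the eigenvalues of 2D − (a + b)J. -/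
open Matrix

/-- The all-ones matrix. -/
noncomputable def Jmat (V : Type*) : Matrix V V ℝ := Matrix.of fun _ _ => 1

/-- The eigenspace of a real matrix `A` (acting by `mulVec`) for the value `μ`. -/
noncomputable def eigSp {V : Type*} [Fintype V] [DecidableEq V]
    (A : Matrix V V ℝ) (μ : ℝ) : Submodule ℝ (V → ℝ) :=
  Module.End.eigenspace (Matrix.mulVecLin A) μ

/-- The switching matrix `I_U`: diagonal with entry `−1` on `U` and `+1` off `U`. -/
noncomputable def switchMat {V : Type*} [Fintype V] [DecidableEq V]
    (U : Finset V) : Matrix V V ℝ :=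
  Matrix.diagonal (fun v => if v ∈ U then -1 else 1)

lemma switch_mul_self {V : Type*} [Fintype V] [DecidableEq V] (U : Finset V) :
    switchMat U * switchMat U = 1 := by
  rw [switchMat, Matrix.diagonal_mul_diagonal]
  have : (fun v => (if v ∈ U then (-1:ℝ) else 1) * (if v ∈ U then (-1:ℝ) else 1))
      = fun _ => 1 := by funext v; split_ifs <;> ring
  rw [this, Matrix.diagonal_one]

lemma switch_empty {V : Type*} [Fintype V] [DecidableEq V] :
    switchMat (∅ : Finset V) = (1 : Matrix V V ℝ) := by
  simp [switchMat, Matrix.diagonal_one]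

lemma Jmat_mulVec {V : Type*} [Fintype V] (w : V → ℝ) (x : V) :
    (Jmat V *ᵥ w) x = ∑ y, w y := by
  simp [Jmat, Matrix.mulVec, dotProduct]

lemma spec_iff {V : Type*} [Fintype V] [DecidableEq V] [Nonempty V]
    (M : Matrix V V ℝ) (μ : ℝ) :
    μ ∈ spectrum ℝ M ↔ eigSp M μ ≠ ⊥ := by
  have h : (Matrix.toLinAlgEquiv' M : (V → ℝ) →ₗ[ℝ] (V → ℝ)) = Matrix.mulVecLin M := by
    ext v; simp [Matrix.toLinAlgEquiv'_apply, Matrix.mulVecLin_apply, Matrix.toLin'_apply]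
  rw [← AlgEquiv.spectrum_eq (Matrix.toLinAlgEquiv' (n := V) (R := ℝ)) M,
      ← Module.End.hasEigenvalue_iff_mem_spectrum]
  rw [Module.End.hasEigenvalue_iff, h]
  rfl

lemma spec_eq {V : Type*} [Fintype V] [DecidableEq V] [Nonempty V]
    (M : Matrix V V ℝ) (r : ℕ) (mu : ℕ → ℝ)
    (hne : ∀ i ≤ r, eigSp M (mu i) ≠ ⊥)
    (hsup : (⊤ : Submodule ℝ (V → ℝ)) ≤ ⨆ i ∈ Finset.range (r + 1), eigSp M (mu i)) :
    spectrum ℝ M = mu '' Set.Iic r := by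
  ext μ
  rw [spec_iff]
  constructor
  · intro h
    by_contra hc
    have hall : ∀ i ∈ Finset.range (r + 1),
        eigSp M (mu i) ≤ ⨆ ν, ⨆ _ : ν ≠ μ, Module.End.eigenspace (Matrix.mulVecLin M) ν := by
      intro i hi
      have hne' : mu i ≠ μ := fun he =>
        hc ⟨i, Nat.lt_succ_iff.mp (Finset.mem_range.mp hi), he⟩
      exact le_iSup₂_of_le (mu i) hne' le_rfl
    have hdis := (Module.End.eigenspaces_iSupIndep (Matrix.mulVecLin M)) μ
    have h2 : (⊤ : Submodule ℝ (V → ℝ)) ≤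
        ⨆ ν, ⨆ _ : ν ≠ μ, Module.End.eigenspace (Matrix.mulVecLin M) ν :=
      le_trans hsup (iSup₂_le hall)
    exact h (le_bot_iff.mp (hdis le_rfl (le_trans le_top h2)))
  · rintro ⟨i, hi, rfl⟩
    exact hne i hi

lemma orth_j {V : Type*} [Fintype V] [DecidableEq V]
    (G : SimpleGraph V) [DecidableRel G.Adj] (k : ℕ)
    (hreg : G.IsRegularOfDegree k) (c : ℝ) (hc : c ≠ (k : ℝ))
    (v : V → ℝ) (hv : G.adjMatrix ℝ *ᵥ v = c • v) :
    Jmat V *ᵥ v = 0 := by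
  have h1 : dotProduct (fun _ => (1:ℝ)) (G.adjMatrix ℝ *ᵥ v) = c * ∑ y, v y := by
    rw [hv]; simp [dotProduct, Finset.mul_sum]
  have h2 : dotProduct (fun _ => (1:ℝ)) (G.adjMatrix ℝ *ᵥ v) = (k:ℝ) * ∑ y, v y := by
    rw [Matrix.dotProduct_mulVec]
    have hrow : (fun _ => (1:ℝ)) ᵥ* G.adjMatrix ℝ = fun _ => (k:ℝ) := by
      funext x
      rw [SimpleGraph.adjMatrix_vecMul_apply]
      simp [hreg x]
    rw [hrow]
    simp [dotProduct, Finset.mul_sum]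
  have hsum : ∑ y, v y = 0 := by
    have := h1.symm.trans h2
    have h3 : (c - (k:ℝ)) * ∑ y, v y = 0 := by linarith
    rcases mul_eq_zero.mp h3 with h | h
    · exact absurd (by linarith : c = (k:ℝ)) hc
    · exact h
  funext x
  rw [Jmat_mulVec, hsum]; rfl

lemma pf_const {V : Type*} [Fintype V] [DecidableEq V]
    (G : SimpleGraph V) [DecidableRel G.Adj] (k : ℕ)
    (hreg : G.IsRegularOfDegree k) (hconn : G.Connected)
    (v : V → ℝ) (hv : G.adjMatrix ℝ *ᵥ v = (k:ℝ) • v) :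
    Jmat V *ᵥ v = (Fintype.card V : ℝ) • v := by
  haveI : Nonempty V := hconn.nonempty
  obtain ⟨u, -, hu⟩ := Finset.exists_max_image Finset.univ v ⟨Classical.arbitrary V, Finset.mem_univ _⟩
  have step : ∀ x y, G.Adj x y → v x = v u → v y = v u := by
    intro x y hxy hx
    by_contra hne
    have hylt : v y < v u := lt_of_le_of_ne (hu y (Finset.mem_univ y)) hne
    have hmem : y ∈ G.neighborFinset x := (SimpleGraph.mem_neighborFinset _ _ _).mpr hxy
    have hlt : ∑ w ∈ G.neighborFinset x, v w < ∑ w ∈ G.neighborFinset x, v u :=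
      Finset.sum_lt_sum (fun i _ => hu i (Finset.mem_univ i)) ⟨y, hmem, hylt⟩
    have hsum : ∑ w ∈ G.neighborFinset x, v w = (k:ℝ) * v u := by
      have := congrFun hv x
      rw [SimpleGraph.adjMatrix_mulVec_apply] at this
      rw [this, Pi.smul_apply, smul_eq_mul, hx]
    rw [hsum, Finset.sum_const, SimpleGraph.card_neighborFinset_eq_degree, hreg x,
        nsmul_eq_mul] at hlt
    exact lt_irrefl _ hlt
  have walkconst : ∀ x y (p : G.Walk x y), v x = v u → v y = v u := by
    intro x y p
    induction p with
    | nil => exact fun h => h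
    | cons h p ih => exact fun hx => ih (step _ _ h hx)
  have hconst : ∀ x, v x = v u := by
    intro x
    obtain ⟨p⟩ := hconn u x
    exact walkconst u x p rfl
  funext x
  rw [Jmat_mulVec]
  have : ∑ y, v y = (Fintype.card V : ℝ) * v u := by
    rw [Finset.sum_congr rfl (fun y _ => hconst y), Finset.sum_const, nsmul_eq_mul]
    rfl
  rw [this, Pi.smul_apply, smul_eq_mul, hconst x]

theorem coreAux {V : Type*} [Fintype V] [DecidableEq V]
    (G : SimpleGraph V) [DecidableRel G.Adj] (k : ℕ)
    (hreg : G.IsRegularOfDegree k) (hconn : G.Connected)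
    (r : ℕ) (lam : ℕ → ℝ) (hk : lam 0 = k)
    (hinj : Set.InjOn lam (Set.Iic r))
    (hne : ∀ i ≤ r, eigSp (G.adjMatrix ℝ) (lam i) ≠ ⊥)
    (hsup : (⨆ i ∈ Finset.range (r + 1), eigSp (G.adjMatrix ℝ) (lam i)) = ⊤)
    (a b : ℝ) (U : Finset V)
    (A A' : Matrix V V ℝ) (hA : A = G.adjMatrix ℝ)
    (hA' : A' - (Jmat V - 1 - A') = switchMat U * (A - (Jmat V - 1 - A)) * switchMat U)
    (D' : Matrix V V ℝ)
    (hD' : D' = a • A' + b • (Jmat V - 1 - A'))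
    (mu : ℕ → ℝ)
    (hmu0 : mu 0 = (a - b) * (2 * (k : ℝ) - (Fintype.card V : ℝ) + 1) - (a + b))
    (hmui : ∀ i, 1 ≤ i → mu i = (a - b) * (2 * lam i + 1) - (a + b)) :
    (∀ i, 1 ≤ i → i ≤ r → ∀ v ∈ eigSp A (lam i),
      ((2 : ℝ) • D' - (a + b) • Jmat V).mulVec ((switchMat U).mulVec v) =
        mu i • ((switchMat U).mulVec v)) ∧
    (((2 : ℝ) • D' - (a + b) • Jmat V).mulVec ((switchMat U).mulVec (fun _ => 1)) =
        mu 0 • ((switchMat U).mulVec (fun _ => 1))) ∧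
    (∀ i ≤ r, Submodule.map (Matrix.mulVecLin (switchMat U)) (eigSp A (lam i)) ≤
        eigSp ((2 : ℝ) • D' - (a + b) • Jmat V) (mu i)) ∧
    spectrum ℝ ((2 : ℝ) • D' - (a + b) • Jmat V) = mu '' (Set.Iic r) := by
  subst hA
  haveI : Nonempty V := hconn.nonempty
  set IU := switchMat U with hIU
  have hIU2 : IU * IU = 1 := switch_mul_self U
  set A : Matrix V V ℝ := G.adjMatrix ℝ with hAdef
  set X : Matrix V V ℝ := A - (Jmat V - 1 - A) with hX
  set Mk : Matrix V V ℝ := (a - b) • X - (a + b) • (1 : Matrix V V ℝ) with hMkdef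
  set M' : Matrix V V ℝ := (2 : ℝ) • D' - (a + b) • Jmat V with hM'def
  have key : M' = (a - b) • (A' - (Jmat V - 1 - A')) - (a + b) • (1 : Matrix V V ℝ) := by
    rw [hM'def, hD']
    module
  have hM'2 : M' = IU * Mk * IU := by
    rw [key, hA', hMkdef]
    simp only [Matrix.mul_sub, Matrix.sub_mul, Matrix.mul_smul, Matrix.smul_mul,
      Matrix.mul_one, hIU2]
  have hact : ∀ w : V → ℝ, M' *ᵥ (IU *ᵥ w) = IU *ᵥ (Mk *ᵥ w) := by
    intro w
    rw [Matrix.mulVec_mulVec, Matrix.mulVec_mulVec, hM'2,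
      Matrix.mul_assoc (IU * Mk) IU IU, hIU2, Matrix.mul_one]
  have hMk_act : ∀ (c t : ℝ) (w : V → ℝ), A *ᵥ w = c • w → Jmat V *ᵥ w = t • w →
      Mk *ᵥ w = ((a - b) * (2 * c + 1 - t) - (a + b)) • w := by
    intro c t w hAw hJw
    have hXw : X *ᵥ w = (2 * c + 1 - t) • w := by
      rw [hX, Matrix.sub_mulVec, Matrix.sub_mulVec, Matrix.sub_mulVec, Matrix.one_mulVec,
        hAw, hJw]
      funext x
      simp only [Pi.sub_apply, Pi.smul_apply, smul_eq_mul]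
      ring
    rw [hMkdef, Matrix.sub_mulVec, Matrix.smul_mulVec, Matrix.smul_mulVec,
      Matrix.one_mulVec, hXw]
    funext x
    simp only [Pi.sub_apply, Pi.smul_apply, smul_eq_mul]
    ring
  have hmem : ∀ (B : Matrix V V ℝ) (μ : ℝ) (w : V → ℝ), w ∈ eigSp B μ ↔ B *ᵥ w = μ • w := by
    intro B μ w
    rw [eigSp, Module.End.mem_eigenspace_iff, Matrix.mulVecLin_apply]
  have part1 : ∀ i, 1 ≤ i → i ≤ r → ∀ v ∈ eigSp A (lam i),
      M' *ᵥ (IU *ᵥ v) = mu i • (IU *ᵥ v) := by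
    intro i h1 hir v hv
    have hAv : A *ᵥ v = lam i • v := (hmem _ _ _).mp hv
    have hlamne : lam i ≠ (k : ℝ) := by
      rw [← hk]
      intro he
      have := hinj (Set.mem_Iic.mpr hir) (Set.mem_Iic.mpr (Nat.zero_le r)) he
      omega
    have hJv : Jmat V *ᵥ v = (0 : ℝ) • v := by
      rw [orth_j G k hreg (lam i) hlamne v hAv, zero_smul]
    rw [hact v, hMk_act (lam i) 0 v hAv hJv, Matrix.mulVec_smul, hmui i h1]
    congr 1
    ring
  have hAj : A *ᵥ (fun _ => (1:ℝ)) = (k : ℝ) • (fun _ => (1:ℝ)) := by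
    funext x
    rw [hAdef, SimpleGraph.adjMatrix_mulVec_apply]
    simp [hreg x]
  have hJj : Jmat V *ᵥ (fun _ => (1:ℝ)) = (Fintype.card V : ℝ) • (fun _ => (1:ℝ)) := by
    funext x
    rw [Jmat_mulVec]
    simp
  have part2 : M' *ᵥ (IU *ᵥ (fun _ => (1:ℝ))) = mu 0 • (IU *ᵥ (fun _ => (1:ℝ))) := by
    rw [hact, hMk_act (k : ℝ) (Fintype.card V : ℝ) _ hAj hJj, Matrix.mulVec_smul, hmu0]
    congr 1
    ring
  have part3 : ∀ i ≤ r, Submodule.map (Matrix.mulVecLin IU) (eigSp A (lam i)) ≤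
      eigSp M' (mu i) := by
    intro i hir w hw
    obtain ⟨v, hv, rfl⟩ := hw
    rw [hmem, Matrix.mulVecLin_apply]
    rcases Nat.eq_zero_or_pos i with rfl | h1
    · have hAv : A *ᵥ v = (k : ℝ) • v := by
        have := (hmem _ _ _).mp hv
        rwa [hk] at this
      have hJv : Jmat V *ᵥ v = (Fintype.card V : ℝ) • v := pf_const G k hreg hconn v hAv
      rw [hact v, hMk_act (k : ℝ) (Fintype.card V : ℝ) v hAv hJv, Matrix.mulVec_smul, hmu0]
      congr 1
      ring
    · exact part1 i h1 hir v hv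
  have hne' : ∀ i ≤ r, eigSp M' (mu i) ≠ ⊥ := by
    intro i hir hbot
    obtain ⟨v, hv, hv0⟩ := (Submodule.ne_bot_iff _).mp (hne i hir)
    have hmemM' : (Matrix.mulVecLin IU) v ∈ eigSp M' (mu i) :=
      part3 i hir ⟨v, hv, rfl⟩
    rw [hbot, Submodule.mem_bot, Matrix.mulVecLin_apply] at hmemM'
    apply hv0
    have h := congrArg (fun w => IU *ᵥ w) hmemM'
    simpa [Matrix.mulVec_mulVec, hIU2, Matrix.one_mulVec, Matrix.mulVec_zero] using h
  have hsup' : (⊤ : Submodule ℝ (V → ℝ)) ≤ ⨆ i ∈ Finset.range (r + 1), eigSp M' (mu i) := by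
    intro w _
    have h1 : IU *ᵥ w ∈ (⨆ i ∈ Finset.range (r + 1), eigSp A (lam i)) := by
      rw [hsup]; trivial
    have h2 : (Matrix.mulVecLin IU) (IU *ᵥ w) = w := by
      simp [Matrix.mulVecLin_apply, Matrix.mulVec_mulVec, hIU2, Matrix.one_mulVec]
    have hmaple : Submodule.map (Matrix.mulVecLin IU)
        (⨆ i ∈ Finset.range (r + 1), eigSp A (lam i)) ≤
        ⨆ i ∈ Finset.range (r + 1), eigSp M' (mu i) := by
      rw [Submodule.map_iSup]
      refine iSup_le fun i => ?_
      rw [Submodule.map_iSup]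
      refine iSup_le fun hi => ?_
      exact le_trans (part3 i (Nat.lt_succ_iff.mp (Finset.mem_range.mp hi)))
        (le_iSup₂_of_le i hi le_rfl)
    exact hmaple ⟨IU *ᵥ w, h1, h2⟩
  exact ⟨part1, part2, part3, spec_eq M' r mu hne' hsup'⟩

/-- let `G` be a connected `k`-regular graph on `n` vertices, `U ⊆ V`, and
`D' = aA' + bĀ'` the dissimilarity matrix of the Seidel switch of `G` with respect to `U`.
Then for every `v ∈ E_i` (`i ≥ 1`), `(2D' − (a+b)J)(I_U v) = μ_i (I_U v)` with
`μ_i = (a − b)(2λ_i + 1) − (a + b)`, and `(2D' − (a+b)J)(I_U j) = μ_0 (I_U j)` with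
`μ_0 = (a − b)(2k − n + 1) − (a + b)`. In particular the eigenvalues of `2D' − (a+b)J`
are `μ_0, …, μ_r` with eigenspaces `I_U E_0, …, I_U E_r`, and they coincide with the
eigenvalues of `2D − (a+b)J`. -/
theorem stmt2 {V : Type*} [Fintype V] [DecidableEq V]
    (G : SimpleGraph V) [DecidableRel G.Adj] (k : ℕ)
    (hreg : G.IsRegularOfDegree k) (hconn : G.Connected)
    (r : ℕ) (lam : ℕ → ℝ) (hk : lam 0 = k)
    (hinj : Set.InjOn lam (Set.Iic r))
    (hne : ∀ i ≤ r, eigSp (G.adjMatrix ℝ) (lam i) ≠ ⊥)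
    (hsup : (⨆ i ∈ Finset.range (r + 1), eigSp (G.adjMatrix ℝ) (lam i)) = ⊤)
    (a b : ℝ) (U : Finset V)
    (A A' : Matrix V V ℝ) (hA : A = G.adjMatrix ℝ)
    (hA' : A' - (Jmat V - 1 - A') = switchMat U * (A - (Jmat V - 1 - A)) * switchMat U)
    (D D' : Matrix V V ℝ)
    (hD : D = a • A + b • (Jmat V - 1 - A))
    (hD' : D' = a • A' + b • (Jmat V - 1 - A'))
    (mu : ℕ → ℝ)
    (hmu0 : mu 0 = (a - b) * (2 * (k : ℝ) - (Fintype.card V : ℝ) + 1) - (a + b))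
    (hmui : ∀ i, 1 ≤ i → mu i = (a - b) * (2 * lam i + 1) - (a + b)) :
    (∀ i, 1 ≤ i → i ≤ r → ∀ v ∈ eigSp A (lam i),
      ((2 : ℝ) • D' - (a + b) • Jmat V).mulVec ((switchMat U).mulVec v) =
        mu i • ((switchMat U).mulVec v)) ∧
    ((2 : ℝ) • D' - (a + b) • Jmat V).mulVec ((switchMat U).mulVec (fun _ => 1)) =
        mu 0 • ((switchMat U).mulVec (fun _ => 1)) ∧
    (∀ i ≤ r, Submodule.map (Matrix.mulVecLin (switchMat U)) (eigSp A (lam i)) ≤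
        eigSp ((2 : ℝ) • D' - (a + b) • Jmat V) (mu i)) ∧
    spectrum ℝ ((2 : ℝ) • D' - (a + b) • Jmat V) = mu '' (Set.Iic r) ∧
    spectrum ℝ ((2 : ℝ) • D' - (a + b) • Jmat V) =
      spectrum ℝ ((2 : ℝ) • D - (a + b) • Jmat V) := by
  obtain ⟨p1, p2, p3, p4⟩ := coreAux G k hreg hconn r lam hk hinj hne hsup a b U A A' hA hA'
    D' hD' mu hmu0 hmui
  have hA'0 : A - (Jmat V - 1 - A) =
      switchMat (∅ : Finset V) * (A - (Jmat V - 1 - A)) * switchMat (∅ : Finset V) := by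
    rw [switch_empty, Matrix.one_mul, Matrix.mul_one]
  obtain ⟨-, -, -, q4⟩ := coreAux G k hreg hconn r lam hk hinj hne hsup a b
    (∅ : Finset V) A A hA hA'0 D hD mu hmu0 hmui
  exact ⟨p1, p2, p3, p4, by rw [p4, q4]⟩
end

section
/- Let G be a k-regular graph on n vertices with distinct adjacency eigenvalues λ_0 = k, λ_1, …, λ_r and eigenspaces E_0, …, E_r, let U ⊆ V with characteristic vector u, and fix i ∈ {1, …, r}. Then the following are equivalent: (1) the subspace I_U E_i is contained in j^⊥ (i.e., μ_i is not a main eigenvalue of 2D' − (a + b)J); (2) vᵀ (I_U j) = 0 for every v ∈ E_i; (3) u lies in the orthogonal complement of E_i, namely u ∈ ⊕_{s ≠ i} E_s. -/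
open Matrix

/-- Orthogonal complement of a subspace w.r.t. the dot product. -/
def orthSp {V : Type*} [Fintype V] (S : Submodule ℝ (V → ℝ)) : Submodule ℝ (V → ℝ) where
  carrier := {x | ∀ v ∈ S, v ⬝ᵥ x = 0}
  add_mem' := by intro a b ha hb v hv; simp [dotProduct_add, ha v hv, hb v hv]
  zero_mem' := by intro v hv; simp
  smul_mem' := by intro c a ha v hv; simp [dotProduct_smul, ha v hv]

lemma mem_eigSp {V : Type*} [Fintype V] [DecidableEq V] {A : Matrix V V ℝ} {μ : ℝ}
    {x : V → ℝ} : x ∈ eigSp A μ ↔ A *ᵥ x = μ • x := by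
  rw [eigSp, Module.End.mem_eigenspace_iff, Matrix.mulVecLin_apply]

/-- Eigenvectors of a symmetric real matrix for distinct eigenvalues are orthogonal. -/
lemma eig_orth {V : Type*} [Fintype V] [DecidableEq V] {A : Matrix V V ℝ}
    (hA : Aᵀ = A) {μ ν : ℝ} (h : μ ≠ ν) {v w : V → ℝ}
    (hv : v ∈ eigSp A μ) (hw : w ∈ eigSp A ν) : v ⬝ᵥ w = 0 := by
  rw [mem_eigSp] at hv hw
  have h1 : v ⬝ᵥ A *ᵥ w = (A *ᵥ v) ⬝ᵥ w := by
    rw [dotProduct_mulVec, ← hA, vecMul_transpose, hA]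
  rw [hw, hv, dotProduct_smul, smul_dotProduct] at h1
  have h2 := sub_eq_zero.mpr h1
  rw [← sub_smul] at h2
  rcases smul_eq_zero.mp h2 with h3 | h3
  · exact absurd (sub_eq_zero.mp h3) h.symm
  · exact h3

/-- for a `k`-regular graph with distinct adjacency eigenvalues
`λ_0 = k, λ_1, …, λ_r`, eigenspaces `E_0, …, E_r`, a subset `U ⊆ V` with
characteristic vector `u`, and `1 ≤ i ≤ r`, the following are equivalent:
(1) `I_U E_i ⊆ j^⊥` (i.e. `μ_i` is not a main eigenvalue of `2D' − (a+b)J`);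
(2) `vᵀ (I_U j) = 0` for every `v ∈ E_i`;
(3) `u ∈ ⊕_{s ≠ i} E_s`. -/
theorem stmt3 {V : Type*} [Fintype V] [DecidableEq V]
    (G : SimpleGraph V) [DecidableRel G.Adj] (k : ℕ)
    (hreg : G.IsRegularOfDegree k)
    (r : ℕ) (lam : ℕ → ℝ) (hk : lam 0 = k)
    (hinj : Set.InjOn lam (Set.Iic r))
    (hne : ∀ i ≤ r, eigSp (G.adjMatrix ℝ) (lam i) ≠ ⊥)
    (hsup : (⨆ i ∈ Finset.range (r + 1), eigSp (G.adjMatrix ℝ) (lam i)) = ⊤)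
    (A : Matrix V V ℝ) (hA : A = G.adjMatrix ℝ)
    (U : Finset V) (i : ℕ) (hi1 : 1 ≤ i) (hir : i ≤ r) :
    ((∀ w ∈ Submodule.map (Matrix.mulVecLin (switchMat U)) (eigSp A (lam i)),
        w ⬝ᵥ (fun _ => (1 : ℝ)) = 0) ↔
      (∀ v ∈ eigSp A (lam i), v ⬝ᵥ ((switchMat U).mulVec (fun _ => 1)) = 0)) ∧
    ((∀ v ∈ eigSp A (lam i), v ⬝ᵥ ((switchMat U).mulVec (fun _ => 1)) = 0) ↔
      (fun v => if v ∈ U then (1 : ℝ) else 0) ∈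
        ⨆ s ∈ Set.Iic r \ {i}, eigSp A (lam s)) := by
  subst hA
  set A := G.adjMatrix ℝ with hA
  have hsym : Aᵀ = A := G.transpose_adjMatrix
  have hMsym : (switchMat U)ᵀ = switchMat U := Matrix.diagonal_transpose _
  -- the key transpose identity
  have key : ∀ v : V → ℝ, (switchMat U *ᵥ v) ⬝ᵥ (fun _ => (1:ℝ))
      = v ⬝ᵥ (switchMat U *ᵥ fun _ => 1) := by
    intro v
    conv_lhs => rw [dotProduct_comm, dotProduct_mulVec, ← hMsym, vecMul_transpose]
    rw [dotProduct_comm]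
  constructor
  · constructor
    · intro h v hv
      rw [← key]
      exact h _ ⟨v, hv, rfl⟩
    · intro h w hw
      obtain ⟨v, hv, rfl⟩ := hw
      rw [mulVecLin_apply, key]
      exact h v hv
  -- second equivalence
  set u : V → ℝ := fun v => if v ∈ U then (1:ℝ) else 0 with hu
  set j : V → ℝ := fun _ => 1 with hj
  have hIj : switchMat U *ᵥ j = j - (2:ℝ) • u := by
    funext v
    simp only [switchMat, mulVec_diagonal, hj, hu, Pi.sub_apply, Pi.smul_apply, smul_eq_mul]
    by_cases hvU : v ∈ U <;> simp [hvU] <;> norm_num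
  have hjeig : j ∈ eigSp A (lam 0) := by
    rw [mem_eigSp, hk]
    funext v
    rw [show j = Function.const V (1:ℝ) from rfl,
      SimpleGraph.adjMatrix_mulVec_const_apply_of_regular hreg]
    simp
  have hlamne : lam i ≠ lam 0 := fun h =>
    absurd (hinj (Set.mem_Iic.mpr hir) (Set.mem_Iic.mpr (Nat.zero_le r)) h) (by omega)
  have hvj : ∀ v ∈ eigSp A (lam i), v ⬝ᵥ j = 0 := fun v hv =>
    eig_orth hsym hlamne hv hjeig
  -- membership in Rest implies orthogonality to E_i
  have hRest_le : (⨆ s ∈ Set.Iic r \ {i}, eigSp A (lam s)) ≤ orthSp (eigSp A (lam i)) := by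
    refine iSup₂_le fun s hs => ?_
    intro x hx v hv
    obtain ⟨hsr, hsi⟩ := hs
    exact eig_orth hsym
      (fun h => hsi (Set.mem_singleton_iff.mpr ((hinj hsr (Set.mem_Iic.mpr hir) h.symm))))
      hv hx
  -- reduce condition (2) to orthogonality to u
  have hred : (∀ v ∈ eigSp A (lam i), v ⬝ᵥ (switchMat U *ᵥ j) = 0)
      ↔ (∀ v ∈ eigSp A (lam i), v ⬝ᵥ u = 0) := by
    constructor <;> intro h v hv <;> have h2 := h v hv <;>
      rw [hIj, dotProduct_sub, dotProduct_smul, hvj v hv, smul_eq_mul] at * <;>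
      [skip; rw [h2]] <;> linarith [h v hv]
  rw [hred]
  -- decompose the top space
  have h1 : (⨆ s ∈ Finset.range (r+1), eigSp A (lam s))
      = ⨆ s ∈ Set.Iic r, eigSp A (lam s) := by
    apply le_antisymm
    · exact iSup₂_le fun s hs => le_iSup₂ (f := fun s _ => eigSp A (lam s)) s
        (Set.mem_Iic.mpr (Nat.lt_succ_iff.mp (Finset.mem_range.mp hs)))
    · exact iSup₂_le fun s hs => le_iSup₂ (f := fun s _ => eigSp A (lam s)) s
        (Finset.mem_range.mpr (Nat.lt_succ_of_le (Set.mem_Iic.mp hs)))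
  have h2 : (Set.Iic r : Set ℕ) = insert i (Set.Iic r \ {i}) := by
    rw [Set.insert_diff_singleton, Set.insert_eq_self.mpr (Set.mem_Iic.mpr hir)]
  have htop : eigSp A (lam i) ⊔ (⨆ s ∈ Set.Iic r \ {i}, eigSp A (lam s)) = ⊤ := by
    rw [h1, h2, iSup_insert] at hsup
    exact hsup
  constructor
  · intro h
    have hu_mem : u ∈ eigSp A (lam i) ⊔ (⨆ s ∈ Set.Iic r \ {i}, eigSp A (lam s)) := by
      rw [htop]; trivial
    obtain ⟨x, hx, y, hy, hxy⟩ := Submodule.mem_sup.mp hu_mem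
    have hxu : x ⬝ᵥ u = 0 := h x hx
    have hxy0 : x ⬝ᵥ y = 0 := hRest_le hy x hx
    have hxx : x ⬝ᵥ x = 0 := by
      have := congrArg (fun z => x ⬝ᵥ z) hxy
      simp only [dotProduct_add] at this
      rw [hxy0, hxu] at this
      linarith
    have hx0 : x = 0 := dotProduct_self_eq_zero.mp hxx
    rw [hx0, zero_add] at hxy
    rwa [← hxy]
  · intro h v hv
    exact hRest_le h v hv
end

section
/- Let G be a k-regular graph on n vertices, let E_i be an eigenspace of its adjacency matrix, and let U ⊆ V. If I_U E_i is not contained in j^⊥, then the main angle β_i of I_U E_i satisfies 1/(n β_i²) = min{ vᵀ v : v ∈ E_i, vᵀ (I_U j) = 1 }. -/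
/-! Switching is an orthogonal involution, so `v ↦ I_U v` maps the constraint set
`{v ∈ E_i : vᵀ (I_U j) = 1}` isometrically onto `{w ∈ I_U E_i : ⟪w, j⟫ = 1}`. In any subspace
`K` with orthogonal projection `P`, every `w ∈ K` has `⟪w, j⟫ = ⟪w, P j⟫`, so by Cauchy–Schwarz
`‖w‖ ‖P j‖ ≥ 1` on the constraint set, with equality at `w = P j / ‖P j‖²`. The minimum is
therefore `1 / ‖P j‖² = 1 / (n β_i²)`. -/

open Matrix

/-- The main angle of a subspace `W` of `ℝ^V`: `(1/√n)‖P j‖`, where `P` is the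
orthogonal projection onto `W` and `j` is the all-ones vector. -/
noncomputable def mainAngle {V : Type*} [Fintype V] [DecidableEq V]
    (W : Submodule ℝ (V → ℝ)) : ℝ :=
  (1 / Real.sqrt (Fintype.card V)) *
    ‖(Submodule.orthogonalProjection (W.map ((WithLp.linearEquiv 2 ℝ (V → ℝ)).symm.toLinearMap)))
      ((WithLp.linearEquiv 2 ℝ (V → ℝ)).symm (fun _ => 1))‖

namespace Submodule

variable {F : Type*} [NormedAddCommGroup F] [InnerProductSpace ℝ F]

lemma inner_starProjection_right_of_mem (K : Submodule ℝ F) [K.HasOrthogonalProjection]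
    {w : F} (hw : w ∈ K) (y : F) : inner ℝ w (K.starProjection y) = inner ℝ w y := by
  rw [← inner_starProjection_left_eq_right, starProjection_eq_self_iff.mpr hw]

theorem isLeast_norm_sq_inner_eq_one (K : Submodule ℝ F) [K.HasOrthogonalProjection]
    (y : F) (hK : ∃ w ∈ K, inner ℝ w y ≠ 0) :
    IsLeast {x | ∃ w ∈ K, inner ℝ w y = 1 ∧ ‖w‖ ^ 2 = x} (‖K.starProjection y‖ ^ 2)⁻¹ := by
  set p := K.starProjection y
  have hpK : p ∈ K := K.starProjection_apply_mem y
  have hp : p ≠ 0 := by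
    obtain ⟨w, hwK, hwy⟩ := hK
    rw [Ne, starProjection_apply_eq_zero_iff, mem_orthogonal']
    exact fun h => hwy (real_inner_comm w y ▸ h w hwK)
  have hpy : inner ℝ p y = ‖p‖ ^ 2 := by
    rw [← K.inner_starProjection_right_of_mem hpK, real_inner_self_eq_norm_sq]
  have hp2 : 0 < ‖p‖ ^ 2 := by positivity
  refine ⟨⟨(‖p‖ ^ 2)⁻¹ • p, K.smul_mem _ hpK, ?_, ?_⟩, ?_⟩
  · rw [real_inner_smul_left, hpy, inv_mul_cancel₀ hp2.ne']
  · rw [norm_smul, mul_pow, Real.norm_of_nonneg (by positivity), inv_pow, sq (‖p‖ ^ 2),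
      mul_inv, mul_assoc, inv_mul_cancel₀ hp2.ne', mul_one]
  · rintro x ⟨w, hwK, hwy, rfl⟩
    have hcs : 1 ≤ ‖w‖ * ‖p‖ := by
      rw [← hwy, ← K.inner_starProjection_right_of_mem hwK]
      exact real_inner_le_norm w p
    rw [inv_le_iff_one_le_mul₀ hp2, ← mul_pow]
    nlinarith

end Submodule

section SwitchMat

variable {V : Type*} [Fintype V] [DecidableEq V] (U : Finset V)

lemma switchMat_transpose : (switchMat U)ᵀ = switchMat U := diagonal_transpose _

lemma switchMat_mul_self : switchMat U * switchMat U = 1 := by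
  rw [switchMat, diagonal_mul_diagonal, ← diagonal_one]
  congr 1
  funext v
  split_ifs <;> norm_num

lemma dotProduct_switchMat_mulVec (x y : V → ℝ) :
    x ⬝ᵥ (switchMat U *ᵥ y) = (switchMat U *ᵥ x) ⬝ᵥ y := by
  rw [dotProduct_mulVec, ← vecMul_transpose, switchMat_transpose]

lemma switchMat_mulVec_dotProduct_switchMat_mulVec (x y : V → ℝ) :
    (switchMat U *ᵥ x) ⬝ᵥ (switchMat U *ᵥ y) = x ⬝ᵥ y := by
  rw [dotProduct_switchMat_mulVec, mulVec_mulVec, switchMat_mul_self, one_mulVec]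

end SwitchMat

section Euclidean

variable {V : Type*} [Fintype V]

lemma EuclideanSpace.real_inner_toLp_toLp (x y : V → ℝ) :
    inner ℝ (WithLp.toLp 2 x) (WithLp.toLp 2 y) = x ⬝ᵥ y := by
  rw [EuclideanSpace.inner_toLp_toLp, star_trivial, dotProduct_comm]

lemma EuclideanSpace.norm_toLp_sq (x : V → ℝ) : ‖WithLp.toLp 2 x‖ ^ 2 = x ⬝ᵥ x := by
  rw [← real_inner_self_eq_norm_sq, EuclideanSpace.real_inner_toLp_toLp]

variable [DecidableEq V]

lemma card_mul_mainAngle_sq (W : Submodule ℝ (V → ℝ)) :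
    Fintype.card V * mainAngle W ^ 2 =
      ‖(W.map (WithLp.linearEquiv 2 ℝ (V → ℝ)).symm.toLinearMap).starProjection
        (WithLp.toLp 2 fun _ => 1)‖ ^ 2 := by
  rcases (Fintype.card V).eq_zero_or_pos with hV | hV
  · have : IsEmpty V := Fintype.card_eq_zero_iff.mp hV
    simp [Subsingleton.elim _ (0 : EuclideanSpace ℝ V)]
  · rw [mainAngle, mul_pow, div_pow, one_pow, Real.sq_sqrt (Nat.cast_nonneg _),
      ← mul_assoc, mul_one_div_cancel (by positivity), one_mul, Submodule.starProjection_apply]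
    rfl

lemma setOf_dotProduct_switchMat_eq_setOf_inner (U : Finset V) (E : Submodule ℝ (V → ℝ))
    (y : V → ℝ) :
    {x : ℝ | ∃ v ∈ E, v ⬝ᵥ (switchMat U *ᵥ y) = 1 ∧ v ⬝ᵥ v = x} =
      {x | ∃ w ∈ (E.map (switchMat U).mulVecLin).map
          (WithLp.linearEquiv 2 ℝ (V → ℝ)).symm.toLinearMap,
        inner ℝ w (WithLp.toLp 2 y) = 1 ∧ ‖w‖ ^ 2 = x} := by
  ext x
  constructor
  · rintro ⟨v, hv, hv1, rfl⟩
    refine ⟨WithLp.toLp 2 (switchMat U *ᵥ v), ⟨_, ⟨v, hv, rfl⟩, rfl⟩, ?_, ?_⟩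
    · rwa [EuclideanSpace.real_inner_toLp_toLp, ← dotProduct_switchMat_mulVec]
    · rw [EuclideanSpace.norm_toLp_sq, switchMat_mulVec_dotProduct_switchMat_mulVec]
  · rintro ⟨_, ⟨_, ⟨v, hv, rfl⟩, rfl⟩, hv1, rfl⟩
    refine ⟨v, hv, ?_, ?_⟩
    · rwa [dotProduct_switchMat_mulVec, ← EuclideanSpace.real_inner_toLp_toLp]
    · exact (switchMat_mulVec_dotProduct_switchMat_mulVec U v v).symm.trans
        (EuclideanSpace.norm_toLp_sq _).symm

end Euclidean

theorem stmt5_general {V : Type*} [Fintype V] [DecidableEq V]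
    (A : Matrix V V ℝ)
    (μ : ℝ)
    (U : Finset V)
    (hmain : ¬ (∀ w ∈ Submodule.map (Matrix.mulVecLin (switchMat U)) (eigSp A μ),
      w ⬝ᵥ (fun _ => (1 : ℝ)) = 0)) :
    IsLeast {x : ℝ | ∃ v ∈ eigSp A μ,
        v ⬝ᵥ ((switchMat U).mulVec (fun _ => 1)) = 1 ∧ v ⬝ᵥ v = x}
      (1 / ((Fintype.card V : ℝ) *
        (mainAngle (Submodule.map (Matrix.mulVecLin (switchMat U)) (eigSp A μ))) ^ 2)) := by
  set K := ((eigSp A μ).map (switchMat U).mulVecLin).map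
    (WithLp.linearEquiv 2 ℝ (V → ℝ)).symm.toLinearMap
  have hK : ∃ w ∈ K, inner ℝ w (WithLp.toLp 2 fun _ => (1 : ℝ)) ≠ 0 := by
    push Not at hmain
    obtain ⟨w, hw, hw1⟩ := hmain
    exact ⟨WithLp.toLp 2 w, ⟨w, hw, rfl⟩, by rwa [EuclideanSpace.real_inner_toLp_toLp]⟩
  rw [setOf_dotProduct_switchMat_eq_setOf_inner, one_div, card_mul_mainAngle_sq]
  exact K.isLeast_norm_sq_inner_eq_one _ hK

/-- for a `k`-regular graph on `n` vertices, an eigenspace `E_i` of its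
adjacency matrix and `U ⊆ V`, if `I_U E_i ⊄ j^⊥` then the main angle `β_i` of `I_U E_i`
satisfies `1/(n β_i²) = min { vᵀv : v ∈ E_i, vᵀ (I_U j) = 1 }`. -/
theorem stmt5 {V : Type*} [Fintype V] [DecidableEq V]
    (G : SimpleGraph V) [DecidableRel G.Adj] (k : ℕ)
    (hreg : G.IsRegularOfDegree k)
    (A : Matrix V V ℝ) (hA : A = G.adjMatrix ℝ)
    (μ : ℝ) (hμ : eigSp A μ ≠ ⊥)
    (U : Finset V)
    (hmain : ¬ (∀ w ∈ Submodule.map (Matrix.mulVecLin (switchMat U)) (eigSp A μ),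
      w ⬝ᵥ (fun _ => (1 : ℝ)) = 0)) :
    IsLeast {x : ℝ | ∃ v ∈ eigSp A μ,
        v ⬝ᵥ ((switchMat U).mulVec (fun _ => 1)) = 1 ∧ v ⬝ᵥ v = x}
      (1 / ((Fintype.card V : ℝ) *
        (mainAngle (Submodule.map (Matrix.mulVecLin (switchMat U)) (eigSp A μ))) ^ 2)) :=
  stmt5_general A μ U hmain
end

section
/- Let G be a k-regular graph on n vertices with connected components V_1, …, V_t, distinct adjacency eigenvalues λ_0 = k, λ_1, …, λ_r and eigenspaces E_0, …, E_r. Let U ⊆ V with U ≠ ∅ and U ≠ V be such that {U, V∖U} is an equitable partition with quotient matrix B = (b_{st}), and assume the eigenvalues of B are exactly k and λ_1. If 2|U ∩ V_i| = |V_i| for every i ∈ {1, …, t}, then I_U E_1 ⊄ j^⊥ and I_U E_s ⊆ j^⊥ for every s ≠ 1. -/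
open Matrix

/-- let `G` be `k`-regular on `n` vertices with components `V_1, …, V_t`,
distinct adjacency eigenvalues `λ_0 = k, λ_1, …, λ_r` and eigenspaces `E_0, …, E_r`.
Let `∅ ≠ U ≠ V` induce an equitable partition `{U, V∖U}` whose quotient matrix `B` has
eigenvalues exactly `k` and `λ_1`.  If `2|U ∩ V_i| = |V_i|` for every component, then
`I_U E_1 ⊄ j^⊥` and `I_U E_s ⊆ j^⊥` for every `s ≠ 1`; i.e. the only main eigenvalue
of `2D' − (a+b)J` is `μ_1`. -/
theorem stmt8 {V : Type*} [Fintype V] [DecidableEq V]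
    (G : SimpleGraph V) [DecidableRel G.Adj] (k : ℕ)
    (hreg : G.IsRegularOfDegree k)
    (r : ℕ) (hr : 1 ≤ r) (lam : ℕ → ℝ) (hk : lam 0 = k)
    (hinj : Set.InjOn lam (Set.Iic r))
    (hne : ∀ i ≤ r, eigSp (G.adjMatrix ℝ) (lam i) ≠ ⊥)
    (hsup : (⨆ i ∈ Finset.range (r + 1), eigSp (G.adjMatrix ℝ) (lam i)) = ⊤)
    (A : Matrix V V ℝ) (hA : A = G.adjMatrix ℝ)
    (U : Finset V) (hU1 : U ≠ ∅) (hU2 : U ≠ Finset.univ)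
    (b11 b12 b21 b22 : ℕ)
    (hequit1 : ∀ v ∈ U, (U.filter (G.Adj v)).card = b11 ∧
      ((Uᶜ).filter (G.Adj v)).card = b12)
    (hequit2 : ∀ v ∉ U, (U.filter (G.Adj v)).card = b21 ∧
      ((Uᶜ).filter (G.Adj v)).card = b22)
    (hB : spectrum ℝ (!![(b11 : ℝ), (b12 : ℝ); (b21 : ℝ), (b22 : ℝ)]) =
      {(k : ℝ), lam 1})
    (hcomp : ∀ c : G.ConnectedComponent,
      2 * Nat.card {v : V // v ∈ U ∧ v ∈ c.supp} = Nat.card c.supp) :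
    ¬ (∀ v ∈ eigSp A (lam 1),
        ((switchMat U).mulVec v) ⬝ᵥ (fun _ => (1 : ℝ)) = 0) ∧
    (∀ s, s ≤ r → s ≠ 1 → ∀ v ∈ eigSp A (lam s),
        ((switchMat U).mulVec v) ⬝ᵥ (fun _ => (1 : ℝ)) = 0) := by
  classical
  obtain ⟨u0, hu0⟩ := Finset.nonempty_iff_ne_empty.2 hU1
  have hUcne : (Uᶜ : Finset V).Nonempty := by
    rw [Finset.nonempty_iff_ne_empty]
    intro h
    exact hU2 (by simpa [Finset.compl_eq_empty_iff] using h)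
  obtain ⟨u1, hu1c⟩ := hUcne
  have hu1 : u1 ∉ U := by simpa using hu1c
  -- each vertex's neighbors split as (in U) + (outside U) = k
  have hdeg : ∀ v : V,
      (U.filter (G.Adj v)).card + ((Uᶜ).filter (G.Adj v)).card = k := by
    intro v
    have hdisj : Disjoint (U.filter (G.Adj v)) ((Uᶜ).filter (G.Adj v)) :=
      Finset.disjoint_filter_filter disjoint_compl_right
    rw [← Finset.card_union_of_disjoint hdisj, ← Finset.filter_union,
      Finset.union_compl]
    have := hreg v
    rwa [SimpleGraph.degree, SimpleGraph.neighborFinset_eq_filter] at this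
  have hk1 : b11 + b12 = k := by
    obtain ⟨h1, h2⟩ := hequit1 u0 hu0
    rw [← h1, ← h2]; exact hdeg u0
  have hk2 : b21 + b22 = k := by
    obtain ⟨h1, h2⟩ := hequit2 u1 hu1
    rw [← h1, ← h2]; exact hdeg u1
  -- double counting the edges between U and Uᶜ
  have hdouble : U.card * b12 = (Uᶜ : Finset V).card * b21 := by
    have lhs : ∑ v ∈ U, ((Uᶜ).filter (G.Adj v)).card = U.card * b12 := by
      rw [Finset.sum_congr rfl (fun v hv => (hequit1 v hv).2),
        Finset.sum_const, smul_eq_mul]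
    have rhs : ∑ u ∈ (Uᶜ : Finset V), (U.filter (G.Adj u)).card
        = (Uᶜ : Finset V).card * b21 := by
      rw [Finset.sum_congr rfl (fun u hu => (hequit2 u (by simpa using hu)).1),
        Finset.sum_const, smul_eq_mul]
    rw [← lhs, ← rhs]
    simp only [Finset.card_filter]
    rw [Finset.sum_comm]
    refine Finset.sum_congr rfl fun u _ => Finset.sum_congr rfl fun v _ => ?_
    simp [G.adj_comm]
  -- |U| = |Uᶜ| from the component condition
  have hhalf : 2 * U.card = Fintype.card V := by
    have key : ∀ (S : Finset V), S.card = ∑ c : G.ConnectedComponent,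
        (S.filter (fun v => G.connectedComponentMk v = c)).card := fun S =>
      Finset.card_eq_sum_card_fiberwise (fun x _ => Finset.mem_univ _)
    calc 2 * U.card = ∑ c : G.ConnectedComponent,
          2 * (U.filter (fun v => G.connectedComponentMk v = c)).card := by
          rw [key U, Finset.mul_sum]
      _ = ∑ c : G.ConnectedComponent,
          ((Finset.univ : Finset V).filter
            (fun v => G.connectedComponentMk v = c)).card := by
          refine Finset.sum_congr rfl fun c _ => ?_
          have h1 : Nat.card {v : V // v ∈ U ∧ v ∈ c.supp}
              = (U.filter (fun v => G.connectedComponentMk v = c)).card := by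
            rw [Nat.card_eq_fintype_card, Fintype.card_subtype]
            congr 1
            ext v
            simp [SimpleGraph.ConnectedComponent.mem_supp_iff, and_comm]
          have h2 : Nat.card c.supp = ((Finset.univ : Finset V).filter
              (fun v => G.connectedComponentMk v = c)).card := by
            rw [Nat.card_eq_fintype_card, Fintype.card_subtype]
            congr 1
            ext v
            simp [SimpleGraph.ConnectedComponent.mem_supp_iff]
          rw [← h1, ← h2, hcomp c]
      _ = Fintype.card V := by rw [← key Finset.univ, Finset.card_univ]
  have hcardU : U.card = (Uᶜ : Finset V).card := by
    have := Finset.card_compl U (α := V)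
    omega
  have hUcard0 : U.card ≠ 0 := Finset.card_ne_zero_of_mem hu0
  have hb1221 : b12 = b21 := by
    rw [← hcardU] at hdouble
    exact Nat.eq_of_mul_eq_mul_left (Nat.pos_of_ne_zero hUcard0) hdouble
  have hb2211 : b22 = b11 := by omega
  -- lam 1 ≠ k
  have hlamne : lam 1 ≠ (k : ℝ) := by
    intro h
    have : (0 : ℕ) = 1 := hinj (Set.mem_Iic.2 (Nat.zero_le r))
      (Set.mem_Iic.2 hr) (by rw [hk, h])
    exact absurd this (by norm_num)
  -- lam 1 = b11 - b21
  have hkval : (k : ℝ) = b11 + b21 := by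
    have h : b11 + b21 = k := by omega
    exact_mod_cast h.symm
  have hlam1 : lam 1 = (b11 : ℝ) - b21 := by
    have hmem : lam 1 ∈ spectrum ℝ (!![(b11 : ℝ), (b12 : ℝ); (b21 : ℝ), (b22 : ℝ)]) := by
      rw [hB]; right; rfl
    rw [spectrum.mem_iff, Matrix.isUnit_iff_isUnit_det] at hmem
    have hdet : det (algebraMap ℝ (Matrix (Fin 2) (Fin 2) ℝ) (lam 1)
        - !![(b11 : ℝ), (b12 : ℝ); (b21 : ℝ), (b22 : ℝ)]) = 0 := by
      by_contra h
      exact hmem (isUnit_iff_ne_zero.2 h)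
    rw [Matrix.det_fin_two] at hdet
    simp [Matrix.algebraMap_matrix_apply] at hdet
    have e2 : (b22 : ℝ) = b11 := by exact_mod_cast congrArg (Nat.cast : ℕ → ℝ) hb2211
    have e3 : (b12 : ℝ) = b21 := by exact_mod_cast congrArg (Nat.cast : ℕ → ℝ) hb1221
    rw [e2, e3] at hdet
    have hfac : (lam 1 - ((b11:ℝ) + b21)) * (lam 1 - ((b11:ℝ) - b21)) = 0 := by
      nlinarith [hdet]
    rcases mul_eq_zero.1 hfac with h | h
    · exact absurd (by rw [hkval]; linarith) hlamne
    · linarith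
  -- the switching vector w
  set w : V → ℝ := fun x => if x ∈ U then (-1 : ℝ) else 1 with hw
  -- w is an eigenvector for lam 1
  have hAw : A.mulVec w = lam 1 • w := by
    funext x
    rw [hA, SimpleGraph.adjMatrix_mulVec_apply]
    have hsplit : ∑ u ∈ G.neighborFinset x, w u
        = ((G.neighborFinset x).filter (fun u => u ∈ U)).card * (-1 : ℝ)
          + ((G.neighborFinset x).filter (fun u => u ∉ U)).card * 1 := by
      rw [hw]
      rw [Finset.sum_ite, Finset.sum_const, Finset.sum_const]
      push_cast
      ring
    have hin : ((G.neighborFinset x).filter (fun u => u ∈ U)).card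
        = (U.filter (G.Adj x)).card := by
      congr 1
      ext u
      simp [SimpleGraph.mem_neighborFinset, and_comm]
    have hout : ((G.neighborFinset x).filter (fun u => u ∉ U)).card
        = ((Uᶜ).filter (G.Adj x)).card := by
      congr 1
      ext u
      simp [SimpleGraph.mem_neighborFinset, and_comm]
    rw [hsplit, hin, hout]
    by_cases hx : x ∈ U
    · obtain ⟨h1, h2⟩ := hequit1 x hx
      rw [h1, h2]
      simp only [Pi.smul_apply, hw, if_pos hx, smul_eq_mul]
      rw [hlam1]
      have e3 : (b12 : ℝ) = b21 := by exact_mod_cast congrArg (Nat.cast : ℕ → ℝ) hb1221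
      rw [e3]; ring
    · obtain ⟨h1, h2⟩ := hequit2 x hx
      rw [h1, h2]
      simp only [Pi.smul_apply, hw, if_neg hx, smul_eq_mul]
      rw [hlam1]
      have e2 : (b22 : ℝ) = b11 := by exact_mod_cast congrArg (Nat.cast : ℕ → ℝ) hb2211
      rw [e2]; ring
  have hwmem : w ∈ eigSp A (lam 1) := by
    rw [eigSp, Module.End.mem_eigenspace_iff, Matrix.mulVecLin_apply]
    exact hAw
  -- the key dot-product identity
  have hdot : ∀ v : V → ℝ,
      ((switchMat U).mulVec v) ⬝ᵥ (fun _ => (1 : ℝ)) = v ⬝ᵥ w := by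
    intro v
    rw [switchMat]
    simp only [dotProduct, Matrix.mulVec_diagonal, hw]
    refine Finset.sum_congr rfl fun x _ => ?_
    by_cases hx : x ∈ U <;> simp [hx] <;> ring
  constructor
  · intro hcon
    have := hcon w hwmem
    rw [hdot] at this
    have hww : w ⬝ᵥ w = (Fintype.card V : ℝ) := by
      simp only [dotProduct, hw]
      have h1 : ∀ x : V, (if x ∈ U then (-1:ℝ) else 1) * (if x ∈ U then (-1:ℝ) else 1) = 1 := by
        intro x; by_cases hx : x ∈ U <;> simp [hx]
      rw [Finset.sum_congr rfl (fun x _ => h1 x)]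
      simp
    rw [hww] at this
    have hpos : 0 < Fintype.card V := Fintype.card_pos_iff.2 ⟨u0⟩
    exact absurd this (by positivity)
  · intro s hs hs1 v hv
    rw [hdot]
    have hvA : A.mulVec v = lam s • v := by
      rw [eigSp, Module.End.mem_eigenspace_iff, Matrix.mulVecLin_apply] at hv
      exact hv
    have hsym : Aᵀ = A := by rw [hA]; exact (SimpleGraph.isSymm_adjMatrix G)
    have key : lam s * (v ⬝ᵥ w) = lam 1 * (v ⬝ᵥ w) := by
      have h1 : (A.mulVec v) ⬝ᵥ w = lam s * (v ⬝ᵥ w) := by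
        rw [hvA, smul_dotProduct, smul_eq_mul]
      have hAv : v ᵥ* A = A.mulVec v := by
        conv_lhs => rw [← hsym]
        rw [Matrix.vecMul_transpose]
      have h2 : (A.mulVec v) ⬝ᵥ w = v ⬝ᵥ (A.mulVec w) := by
        rw [Matrix.dotProduct_mulVec, hAv]
      rw [h2, hAw, dotProduct_smul, smul_eq_mul] at h1
      rw [← h1]
    have hlne : lam s ≠ lam 1 := fun h =>
      hs1 (hinj (Set.mem_Iic.2 hs) (Set.mem_Iic.2 hr) h)
    have : (lam s - lam 1) * (v ⬝ᵥ w) = 0 := by ring_nf; linarith [key]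
    rcases mul_eq_zero.1 this with h | h
    · exact absurd (by linarith) hlne
    · exact h
end

section
/- Let G be a strongly regular graph on n vertices with distinct eigenvalues λ_0 = k, λ_1, λ_2 and eigenspaces E_0 = span{j}, E_1, E_2. Fix a, b ∈ ℝ and set μ_0 = (a − b)(2k − n + 1) − (a + b) and μ_i = (a − b)(2λ_i + 1) − (a + b) for i = 1, 2; assume μ_0 ≠ 0, μ_1 ≠ 0 and μ_2 = 0. Let U ⊆ V be nonempty with U ≠ V and characteristic vector u. If u ∈ E_0 ⊕ E_1 and 2|U| ≠ n, then I_U E_0 ⊄ j^⊥, I_U E_1 ⊄ j^⊥ and I_U E_2 ⊆ j^⊥; that is, the main eigenvalues of 2D' − (a + b)J are exactly μ_0 and μ_1. -/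
open Matrix

/-- `F_M(ℓ) = −(I − j ℓᵀ) M (I − ℓ jᵀ)`, where `j` is the all-ones vector. -/
noncomputable def FMat {n : Type*} [Fintype n] [DecidableEq n]
    (M : Matrix n n ℝ) (ℓ : n → ℝ) : Matrix n n ℝ :=
  -((1 - Matrix.vecMulVec (fun _ => 1) ℓ) * M * (1 - Matrix.vecMulVec ℓ (fun _ => 1)))

/-- Number of positive eigenvalues (with multiplicity) of a real symmetric matrix. -/
noncomputable def sigP {V : Type*} [Fintype V] [DecidableEq V] (M : Matrix V V ℝ) : ℕ :=
  if h : M.IsHermitian then Nat.card {i // 0 < h.eigenvalues i} else 0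

/-- Number of negative eigenvalues (with multiplicity) of a real symmetric matrix. -/
noncomputable def sigN {V : Type*} [Fintype V] [DecidableEq V] (M : Matrix V V ℝ) : ℕ :=
  if h : M.IsHermitian then Nat.card {i // h.eigenvalues i < 0} else 0

/-- The signature `(p, q)` of a real symmetric matrix: the numbers of positive and
negative eigenvalues counted with multiplicity. -/
noncomputable def signature {V : Type*} [Fintype V] [DecidableEq V]
    (M : Matrix V V ℝ) : ℕ × ℕ := (sigP M, sigN M)


/-- Orthogonality of eigenspaces of a real symmetric matrix. -/
lemma orth_aux {V : Type*} [Fintype V] [DecidableEq V]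
    (A : Matrix V V ℝ) (hs : Aᵀ = A) (μ ν : ℝ) (hμν : μ ≠ ν)
    (v w : V → ℝ) (hv : v ∈ eigSp A μ) (hw : w ∈ eigSp A ν) : v ⬝ᵥ w = 0 := by
  rw [eigSp, Module.End.mem_eigenspace_iff] at hv hw
  simp only [Matrix.mulVecLin_apply] at hv hw
  have h1 : A.mulVec v ⬝ᵥ w = v ⬝ᵥ A.mulVec w := by
    rw [Matrix.dotProduct_mulVec, ← hs, Matrix.vecMul_transpose, hs]
  rw [hv, hw, smul_dotProduct, dotProduct_smul, smul_eq_mul, smul_eq_mul] at h1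
  have := sub_eq_zero.mpr h1
  rw [← sub_mul] at this
  rcases mul_eq_zero.mp this with h | h
  · exact absurd (sub_eq_zero.mp h) hμν
  · exact h

lemma switch_dot_aux {V : Type*} [Fintype V] [DecidableEq V]
    (U : Finset V) (v : V → ℝ) :
    ((switchMat U).mulVec v) ⬝ᵥ (fun _ => (1 : ℝ)) =
      (fun _ => (1 : ℝ)) ⬝ᵥ v - 2 * ((fun x => if x ∈ U then (1:ℝ) else 0) ⬝ᵥ v) := by
  simp only [switchMat, dotProduct, Matrix.mulVec_diagonal, mul_one,
    Finset.mul_sum, ← Finset.sum_sub_distrib]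
  apply Finset.sum_congr rfl
  intro i _
  split_ifs with h <;> ring

/-- let `G` be a strongly regular graph on `n` vertices with distinct
eigenvalues `k, λ_1, λ_2` and eigenspaces `E_0 = span{j}, E_1, E_2`.  With
`μ_0 = (a−b)(2k−n+1)−(a+b)`, `μ_i = (a−b)(2λ_i+1)−(a+b)`, assume `μ_0 ≠ 0`, `μ_1 ≠ 0`,
`μ_2 = 0`.  Let `∅ ≠ U ≠ V` have characteristic vector `u`.  If `u ∈ E_0 ⊕ E_1` and
`2|U| ≠ n`, then `I_U E_0 ⊄ j^⊥`, `I_U E_1 ⊄ j^⊥` and `I_U E_2 ⊆ j^⊥`; that is, the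
main eigenvalues of `2D' − (a+b)J` are exactly `μ_0` and `μ_1`. -/
theorem stmt10 {V : Type*} [Fintype V] [DecidableEq V]
    (G : SimpleGraph V) [DecidableRel G.Adj]
    (n k l m : ℕ) (hn : n = Fintype.card V) (hsrg : G.IsSRGWith n k l m)
    (lam1 lam2 : ℝ) (hd1 : (k : ℝ) ≠ lam1) (hd2 : (k : ℝ) ≠ lam2) (hd3 : lam1 ≠ lam2)
    (A : Matrix V V ℝ) (hA : A = G.adjMatrix ℝ)
    (hE0 : eigSp A k = Submodule.span ℝ {(fun _ => 1 : V → ℝ)})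
    (hne1 : eigSp A lam1 ≠ ⊥) (hne2 : eigSp A lam2 ≠ ⊥)
    (hsup : eigSp A k ⊔ eigSp A lam1 ⊔ eigSp A lam2 = ⊤)
    (a b : ℝ) (mu0 mu1 mu2 : ℝ)
    (hmu0 : mu0 = (a - b) * (2 * (k : ℝ) - (n : ℝ) + 1) - (a + b))
    (hmu1 : mu1 = (a - b) * (2 * lam1 + 1) - (a + b))
    (hmu2 : mu2 = (a - b) * (2 * lam2 + 1) - (a + b))
    (h0 : mu0 ≠ 0) (h1 : mu1 ≠ 0) (h2 : mu2 = 0)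
    (U : Finset V) (hU1 : U ≠ ∅) (hU2 : U ≠ Finset.univ)
    (hu : (fun v => if v ∈ U then (1 : ℝ) else 0) ∈ eigSp A k ⊔ eigSp A lam1)
    (hcard : 2 * U.card ≠ n) :
    ¬ (∀ v ∈ eigSp A (k : ℝ),
        ((switchMat U).mulVec v) ⬝ᵥ (fun _ => (1 : ℝ)) = 0) ∧
    ¬ (∀ v ∈ eigSp A lam1,
        ((switchMat U).mulVec v) ⬝ᵥ (fun _ => (1 : ℝ)) = 0) ∧
    (∀ v ∈ eigSp A lam2,
        ((switchMat U).mulVec v) ⬝ᵥ (fun _ => (1 : ℝ)) = 0) := by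
  have hsym : Aᵀ = A := by rw [hA]; exact (SimpleGraph.isSymm_adjMatrix G)
  set j : V → ℝ := fun _ => 1 with hj
  set u : V → ℝ := fun v => if v ∈ U then (1:ℝ) else 0 with hudef
  have hjmem : j ∈ eigSp A (k : ℝ) := by
    rw [hE0]; exact Submodule.mem_span_singleton_self _
  have hjdotu : u ⬝ᵥ j = (U.card : ℝ) := by
    simp [hudef, hj, dotProduct, Finset.sum_ite_mem]
  have hjdotj : j ⬝ᵥ j = (n : ℝ) := by
    simp [hj, dotProduct, hn]
  refine ⟨?_, ?_, ?_⟩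
  · intro H
    have := H j hjmem
    rw [switch_dot_aux] at this
    have hju : (fun _ => (1:ℝ)) ⬝ᵥ j = (n : ℝ) := hjdotj
    have huj : u ⬝ᵥ j = (U.card : ℝ) := hjdotu
    rw [hju, huj] at this
    have h2n : (2 : ℝ) * (U.card : ℝ) ≠ (n : ℝ) := by exact_mod_cast hcard
    exact h2n (by linarith)
  · intro H
    -- every v in E1 has u ⬝ᵥ v = 0
    have hudot : ∀ v ∈ eigSp A lam1, u ⬝ᵥ v = 0 := by
      intro v hv
      have := H v hv
      rw [switch_dot_aux] at this
      have hjv : (fun _ => (1:ℝ)) ⬝ᵥ v = 0 := orth_aux A hsym _ _ hd1 j v hjmem hv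
      rw [hjv] at this
      linarith
    obtain ⟨y, hy, z, hz, hyz⟩ := Submodule.mem_sup.mp hu
    have huz : u ⬝ᵥ z = 0 := hudot z hz
    have hyzd : y ⬝ᵥ z = 0 := orth_aux A hsym _ _ hd1 y z hy hz
    have hzz : z ⬝ᵥ z = 0 := by
      have : u ⬝ᵥ z = y ⬝ᵥ z + z ⬝ᵥ z := by
        rw [← hyz]; simp [add_dotProduct]
      rw [huz, hyzd] at this; linarith
    have hz0 : z = 0 := dotProduct_self_eq_zero.mp hzz
    have hu0 : u ∈ eigSp A (k:ℝ) := by rw [← hyz, hz0, add_zero]; exact hy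
    rw [hE0, Submodule.mem_span_singleton] at hu0
    obtain ⟨c, hc⟩ := hu0
    obtain ⟨x1, hx1⟩ := Finset.nonempty_iff_ne_empty.mpr hU1
    obtain ⟨x2, hx2⟩ : ∃ x, x ∉ U := by
      by_contra h
      push_neg at h
      exact hU2 (Finset.eq_univ_iff_forall.mpr h)
    have e1 : c = 1 := by
      have := congrFun hc x1; simp [hudef, hj, hx1] at this; simpa using this
    have e2 : c = 0 := by
      have := congrFun hc x2; simp [hudef, hj, hx2] at this; simpa using this
    rw [e1] at e2; norm_num at e2
  · intro v hv
    rw [switch_dot_aux]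
    have hjv : (fun _ => (1:ℝ)) ⬝ᵥ v = 0 := orth_aux A hsym _ _ hd2 j v hjmem hv
    obtain ⟨y, hy, z, hz, hyz⟩ := Submodule.mem_sup.mp hu
    have h1 : y ⬝ᵥ v = 0 := orth_aux A hsym _ _ hd2 y v hy hv
    have h2 : z ⬝ᵥ v = 0 := orth_aux A hsym _ _ hd3 z v hz hv
    have huv : u ⬝ᵥ v = 0 := by
      rw [← hyz, add_dotProduct, h1, h2, add_zero]
    rw [hjv, huv]; ring
end

section
/- Let G be a strongly regular graph on n vertices with distinct eigenvalues λ_0 = k, λ_1, λ_2 and eigenspaces E_0 = span{j}, E_1, E_2. Fix a, b ∈ ℝ and set μ_0 = (a − b)(2k − n + 1) − (a + b) and μ_i = (a − b)(2λ_i + 1) − (a + b) for i = 1, 2; assume μ_0 ≠ 0, μ_1 ≠ 0 and μ_2 = 0. Let U ⊆ V be nonempty with U ≠ V and characteristic vector u. If u ∈ E_0 ⊕ E_1 and 2|U| = n, then I_U E_1 ⊄ j^⊥ while I_U E_0 ⊆ j^⊥ and I_U E_2 ⊆ j^⊥; that is, the only main eigenvalue of 2D' − (a + b)J is μ_1. 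-/
open Matrix

section Aux
variable {V : Type*} [Fintype V] [DecidableEq V]

lemma switch_dot (U : Finset V) (v : V → ℝ) :
    ((switchMat U).mulVec v) ⬝ᵥ (fun _ => (1:ℝ)) =
      (∑ x, v x) - 2 * ∑ x ∈ U, v x := by
  have h : ∀ x : V, ((switchMat U).mulVec v) x * 1 =
      v x - 2 * (if x ∈ U then v x else 0) := by
    intro x
    simp only [switchMat, Matrix.mulVec_diagonal]
    split <;> ring
  simp only [dotProduct, h, Finset.sum_sub_distrib, ← Finset.mul_sum,
    Finset.sum_ite_mem, Finset.univ_inter]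

lemma eig_orth_s11 (A : Matrix V V ℝ) (hsym : A.IsSymm) {α β : ℝ} (hne : α ≠ β)
    {v w : V → ℝ} (hv : v ∈ eigSp A α) (hw : w ∈ eigSp A β) : v ⬝ᵥ w = 0 := by
  rw [eigSp, Module.End.mem_eigenspace_iff] at hv hw
  simp only [Matrix.mulVecLin_apply] at hv hw
  have h1 : A.mulVec v ⬝ᵥ w = v ⬝ᵥ A.mulVec w := by
    rw [Matrix.dotProduct_mulVec, ← Matrix.mulVec_transpose, hsym.eq]
  rw [hv, hw, smul_dotProduct, dotProduct_smul] at h1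
  have h2 : (α - β) * (v ⬝ᵥ w) = 0 := by
    have := sub_eq_zero.mpr h1
    simpa [smul_eq_mul, sub_mul] using this
  rcases mul_eq_zero.mp h2 with h | h
  · exact absurd (sub_eq_zero.mp h) hne
  · exact h

end Aux

/-- let `G` be a strongly regular graph on `n` vertices with distinct
eigenvalues `k, λ_1, λ_2` and eigenspaces `E_0 = span{j}, E_1, E_2`.  With
`μ_0 = (a−b)(2k−n+1)−(a+b)`, `μ_i = (a−b)(2λ_i+1)−(a+b)`, assume `μ_0 ≠ 0`, `μ_1 ≠ 0`,
`μ_2 = 0`.  Let `∅ ≠ U ≠ V` have characteristic vector `u`.  If `u ∈ E_0 ⊕ E_1` and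
`2|U| = n`, then `I_U E_1 ⊄ j^⊥` while `I_U E_0 ⊆ j^⊥` and `I_U E_2 ⊆ j^⊥`; that is,
the only main eigenvalue of `2D' − (a+b)J` is `μ_1`. -/
theorem stmt11 {V : Type*} [Fintype V] [DecidableEq V]
    (G : SimpleGraph V) [DecidableRel G.Adj]
    (n k l m : ℕ) (hn : n = Fintype.card V) (hsrg : G.IsSRGWith n k l m)
    (lam1 lam2 : ℝ) (hd1 : (k : ℝ) ≠ lam1) (hd2 : (k : ℝ) ≠ lam2) (hd3 : lam1 ≠ lam2)
    (A : Matrix V V ℝ) (hA : A = G.adjMatrix ℝ)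
    (hE0 : eigSp A k = Submodule.span ℝ {(fun _ => 1 : V → ℝ)})
    (hne1 : eigSp A lam1 ≠ ⊥) (hne2 : eigSp A lam2 ≠ ⊥)
    (hsup : eigSp A k ⊔ eigSp A lam1 ⊔ eigSp A lam2 = ⊤)
    (a b : ℝ) (mu0 mu1 mu2 : ℝ)
    (hmu0 : mu0 = (a - b) * (2 * (k : ℝ) - (n : ℝ) + 1) - (a + b))
    (hmu1 : mu1 = (a - b) * (2 * lam1 + 1) - (a + b))
    (hmu2 : mu2 = (a - b) * (2 * lam2 + 1) - (a + b))
    (h0 : mu0 ≠ 0) (h1 : mu1 ≠ 0) (h2 : mu2 = 0)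
    (U : Finset V) (hU1 : U ≠ ∅) (hU2 : U ≠ Finset.univ)
    (hu : (fun v => if v ∈ U then (1 : ℝ) else 0) ∈ eigSp A k ⊔ eigSp A lam1)
    (hcard : 2 * U.card = n) :
    ¬ (∀ v ∈ eigSp A lam1,
        ((switchMat U).mulVec v) ⬝ᵥ (fun _ => (1 : ℝ)) = 0) ∧
    (∀ v ∈ eigSp A (k : ℝ),
        ((switchMat U).mulVec v) ⬝ᵥ (fun _ => (1 : ℝ)) = 0) ∧
    (∀ v ∈ eigSp A lam2,
        ((switchMat U).mulVec v) ⬝ᵥ (fun _ => (1 : ℝ)) = 0) := by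
  
  have hsym : A.IsSymm := by rw [hA]; exact (SimpleGraph.isSymm_adjMatrix G)
  have hjmem : (fun _ => (1:ℝ)) ∈ eigSp A (k : ℝ) := by
    rw [hE0]; exact Submodule.mem_span_singleton_self _
  set u : V → ℝ := (fun v => if v ∈ U then (1 : ℝ) else 0) with hu_def
  have usum : ∀ w : V → ℝ, (∑ x ∈ U, w x) = u ⬝ᵥ w := by
    intro w
    simp [dotProduct, hu_def, ite_mul, Finset.sum_ite_mem]
  obtain ⟨w0, hw0, w1, hw1, hsum⟩ := Submodule.mem_sup.mp hu
  obtain ⟨c, hc⟩ := Submodule.mem_span_singleton.mp (hE0 ▸ hw0)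
  refine ⟨?_, ?_, ?_⟩
  · intro H
    have hkey := H w1 hw1
    rw [switch_dot] at hkey
    have hsum1 : (∑ x, w1 x) = 0 := by
      have := eig_orth_s11 A hsym hd1 hjmem hw1
      simpa [dotProduct] using this
    have hw0w1 : w0 ⬝ᵥ w1 = 0 := eig_orth_s11 A hsym hd1 hw0 hw1
    have husum : (∑ x ∈ U, w1 x) = w1 ⬝ᵥ w1 := by
      rw [usum, ← hsum]
      simp [add_dotProduct, hw0w1]
    rw [hsum1, husum] at hkey
    have hw1z : w1 = 0 := by
      have : w1 ⬝ᵥ w1 = 0 := by linarith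
      exact dotProduct_self_eq_zero.mp this
    have huc : u = c • (fun _ => (1:ℝ)) := by
      rw [← hsum, hw1z, ← hc]; simp
    obtain ⟨x, hx⟩ := Finset.nonempty_iff_ne_empty.mpr hU1
    obtain ⟨y, hy⟩ : ∃ y, y ∉ U := by
      by_contra h; push_neg at h; exact hU2 (Finset.eq_univ_iff_forall.mpr h)
    have h1c : (1:ℝ) = c := by
      have := congrFun huc x; simpa [hu_def, hx] using this
    have h0c : (0:ℝ) = c := by
      have := congrFun huc y; simpa [hu_def, hy] using this
    exact one_ne_zero (h1c.trans h0c.symm)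
  · intro v hv
    obtain ⟨d, hd⟩ := Submodule.mem_span_singleton.mp (hE0 ▸ hv)
    rw [switch_dot]
    have h1 : (∑ x, v x) = d * Fintype.card V := by
      rw [← hd]; simp [mul_comm]
    have h2 : (∑ x ∈ U, v x) = d * U.card := by
      rw [← hd]; simp [mul_comm]
    rw [h1, h2]
    have hc2 : 2 * (U.card : ℝ) = Fintype.card V := by
      have : ((2 * U.card : ℕ) : ℝ) = ((Fintype.card V : ℕ) : ℝ) := by
        rw [hcard, hn]
      push_cast at this
      linarith
    rw [← hc2]; ring
  · intro v hv
    rw [switch_dot]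
    have h1 : (∑ x, v x) = 0 := by
      have := eig_orth_s11 A hsym hd2 hjmem hv
      simpa [dotProduct] using this
    have h2 : (∑ x ∈ U, v x) = 0 := by
      rw [usum, ← hsum, add_dotProduct,
        eig_orth_s11 A hsym hd2 hw0 hv, eig_orth_s11 A hsym hd3 hw1 hv]
      ring
    rw [h1, h2]; ring
end

section
/- Let m ≥ 4 and let V = {S ⊆ {1,…,m} : |S| = 2}. For i ∈ {1,…,m}, let U_i = {S ∈ V : i ∈ S} with characteristic vector u_i ∈ ℝ^V. Let U ⊆ V be nonempty with U ≠ V. Then the characteristic vector of U lies in span_ℝ{u_1, …, u_m} if and only if U = U_j for some j ∈ {1,…,m} or U = V ∖ U_k for some k ∈ {1,…,m}. -/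
/-!
Write the indicator of `U` as `∑ i, c i • u i`, so that its value at `{a, b}` is `c a + c b`;
thus `c a + c b ∈ {0, 1}` for all `a ≠ b`. If `c` is constant, then `c ≡ 0` or `c ≡ 1/2`, which
give `U = ∅` and `U = V`. Otherwise, comparing `c a + c x` and `c b + c x` for a third index `x`
yields indices `a ≠ b` with `c a = c b + 1`, and then `c x = -c b` for every other `x`. Finally
`c a + c b = 2 c b + 1 ∈ {0, 1}` leaves `c b = 0`, where `c` is the indicator of `a` and
`U = U_a`, or `c b = -1/2`, where `c = 1/2 - [· = b]` and `U = V ∖ U_b`.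
-/

open Finset

section Weights

variable {α : Type*} [DecidableEq α] {k : ℕ}

def subsetWeight (c : α → ℝ) (S : {S : Finset α // S.card = k}) : ℝ := ∑ t ∈ S.1, c t

theorem mem_span_membership_iff_exists_eq_subsetWeight [Fintype α]
    (f : {S : Finset α // S.card = k} → ℝ) :
    f ∈ Submodule.span ℝ (Set.range fun i : α =>
        fun S : {S : Finset α // S.card = k} => if i ∈ S.1 then (1 : ℝ) else 0) ↔
      ∃ c : α → ℝ, f = subsetWeight c := by
  rw [Submodule.mem_span_range_iff_exists_fun]
  refine exists_congr fun c =>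
    ⟨fun h => h ▸ funext fun S => ?_, fun h => h ▸ funext fun S => ?_⟩ <;>
    simp [subsetWeight, sum_ite_mem]

theorem subsetWeight_pair (c : α → ℝ) {a b : α} (hab : a ≠ b) :
    subsetWeight c ⟨{a, b}, card_pair hab⟩ = c a + c b :=
  sum_pair hab

theorem subsetWeight_single (j : α) :
    subsetWeight (k := k) (Pi.single j 1) = Set.indicator {S | j ∈ S.1} 1 := by
  ext S
  simp [subsetWeight, sum_pi_single', Set.indicator_apply]

theorem subsetWeight_half_sub_single (j : α) :
    subsetWeight (k := 2) (fun i => 1 / 2 - (Pi.single j 1 : α → ℝ) i) =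
      Set.indicator {S | j ∉ S.1} 1 := by
  ext S
  by_cases h : j ∈ S.1 <;> simp [subsetWeight, sum_sub_distrib, S.2, h]

end Weights

theorem subsetWeight_const {α : Type*} {k : ℕ} (x : ℝ) (S : {S : Finset α // S.card = k}) :
    subsetWeight (fun _ => x) S = k * x := by
  simp [subsetWeight, S.2]

theorem exists_ne_ne_of_three_le_card {α : Type*} [Fintype α] (h3 : 3 ≤ Fintype.card α)
    (a b : α) : ∃ x, x ≠ a ∧ x ≠ b := by
  classical
  obtain ⟨x, -, hx⟩ := exists_mem_notMem_of_card_lt_card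
    (card_le_two.trans_lt (by rw [card_univ]; omega) : #{a, b} < #(univ : Finset α))
  exact ⟨x, by simpa [not_or] using hx⟩

section PairSums

variable {α : Type*} {c : α → ℝ}

theorem exists_eq_add_one_of_ne (hc : ∀ a b, a ≠ b → c a + c b = 0 ∨ c a + c b = 1)
    {a b x : α} (hxa : x ≠ a) (hxb : x ≠ b) (h : c a ≠ c b) :
    ∃ a' b', a' ≠ b' ∧ c a' = c b' + 1 := by
  rcases hc a x hxa.symm with ha | ha <;> rcases hc b x hxb.symm with hb | hb
  · exact absurd (by linarith) h
  · exact ⟨b, a, fun h' => h (congrArg c h'.symm), by linarith⟩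
  · exact ⟨a, b, fun h' => h (congrArg c h'), by linarith⟩
  · exact absurd (by linarith) h

theorem eq_neg_of_eq_add_one (hc : ∀ a b, a ≠ b → c a + c b = 0 ∨ c a + c b = 1)
    {a b x : α} (hxa : x ≠ a) (hxb : x ≠ b) (h : c a = c b + 1) :
    c x = -c b := by
  rcases hc a x hxa.symm with ha | ha <;> rcases hc b x hxb.symm with hb | hb <;> linarith

theorem eq_of_pair_sums_mem_zero_one [Fintype α] [DecidableEq α] (h3 : 3 ≤ Fintype.card α)
    (hc : ∀ a b, a ≠ b → c a + c b = 0 ∨ c a + c b = 1) :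
    c = 0 ∨ c = (fun _ => 1 / 2) ∨ (∃ j, c = Pi.single j 1) ∨
      ∃ k, c = fun i => 1 / 2 - (Pi.single k 1 : α → ℝ) i := by
  by_cases hconst : ∀ a b, c a = c b
  · obtain ⟨a, b, hab⟩ := Fintype.exists_pair_of_one_lt_card (by omega : 1 < Fintype.card α)
    have hfun : c = fun _ => c a := funext fun i => hconst i a
    rcases hc a b hab with h | h <;> rw [← hconst a b] at h
    · exact Or.inl (hfun.trans (funext fun _ => by rw [Pi.zero_apply]; linarith))
    · exact Or.inr (Or.inl (hfun.trans (funext fun _ => by linarith)))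
  push Not at hconst
  obtain ⟨a₀, b₀, hne⟩ := hconst
  obtain ⟨x, hxa, hxb⟩ := exists_ne_ne_of_three_le_card h3 a₀ b₀
  obtain ⟨a, b, hab, hadd⟩ := exists_eq_add_one_of_ne hc hxa hxb hne
  have hrest : ∀ i, i ≠ a → i ≠ b → c i = -c b := fun i hia hib =>
    eq_neg_of_eq_add_one hc hia hib hadd
  rcases hc a b hab with h | h
  · refine Or.inr (Or.inr (Or.inr ⟨b, funext fun i => ?_⟩))
    rcases eq_or_ne i b with rfl | hib
    · rw [Pi.single_eq_same]; linarith
    rw [Pi.single_eq_of_ne hib]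
    rcases eq_or_ne i a with rfl | hia
    · linarith
    · rw [hrest i hia hib]; linarith
  · refine Or.inr (Or.inr (Or.inl ⟨a, funext fun i => ?_⟩))
    rcases eq_or_ne i a with rfl | hia
    · rw [Pi.single_eq_same]; linarith
    rw [Pi.single_eq_of_ne hia]
    rcases eq_or_ne i b with rfl | hib
    · linarith
    · rw [hrest i hia hib]; linarith

end PairSums

/-- let `m ≥ 4` and `V = {S ⊆ {1,…,m} : |S| = 2}` (the vertex set of the
Johnson graph `J(m,2)`).  For `i`, let `U_i = {S ∈ V : i ∈ S}` with characteristic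
vector `u_i`.  For a nonempty `U ⊆ V` with `U ≠ V`, the characteristic vector of `U`
lies in `span_ℝ{u_1, …, u_m}` iff `U = U_j` for some `j` or `U = V ∖ U_k` for some `k`. -/
theorem stmt13 (m : ℕ) (hm : 4 ≤ m)
    (U : Set {S : Finset (Fin m) // S.card = 2}) (hU1 : U ≠ ∅) (hU2 : U ≠ Set.univ) :
    (Set.indicator U (fun _ => (1 : ℝ)) ∈
        Submodule.span ℝ (Set.range fun i : Fin m =>
          (fun S : {S : Finset (Fin m) // S.card = 2} =>
            if i ∈ S.1 then (1 : ℝ) else 0))) ↔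
      ((∃ j : Fin m, U = {S | j ∈ S.1}) ∨ (∃ k : Fin m, U = {S | k ∉ S.1})) := by
  rw [mem_span_membership_iff_exists_eq_subsetWeight]
  constructor
  · rintro ⟨c, hc⟩
    have hpair : ∀ a b, a ≠ b → c a + c b = 0 ∨ c a + c b = 1 := fun a b hab => by
      classical
      rw [← subsetWeight_pair c hab, ← hc, Set.indicator_apply]
      split_ifs <;> simp
    rcases eq_of_pair_sums_mem_zero_one (by rw [Fintype.card_fin]; omega) hpair with
      rfl | rfl | ⟨j, rfl⟩ | ⟨k, rfl⟩
    · refine absurd (Set.indicator_one_inj ℝ (t := ∅) (hc.trans (funext fun S => ?_))) hU1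
      simp [subsetWeight]
    · refine absurd (Set.indicator_one_inj ℝ (t := Set.univ) (hc.trans (funext fun S => ?_))) hU2
      rw [subsetWeight_const]; norm_num
    · exact Or.inl ⟨j, Set.indicator_one_inj ℝ (hc.trans (subsetWeight_single j))⟩
    · exact Or.inr ⟨k, Set.indicator_one_inj ℝ (hc.trans (subsetWeight_half_sub_single k))⟩
  · rintro (⟨j, rfl⟩ | ⟨k, rfl⟩)
    · exact ⟨_, (subsetWeight_single j).symm⟩
    · exact ⟨_, (subsetWeight_half_sub_single k).symm⟩
end

section
/- Let m ≥ 2 and let V = {1,…,m} × {1,…,m}. For i ∈ {1,…,m}, let U_i = {(i, y) : y ∈ {1,…,m}} and V_i = {(y, i) : y ∈ {1,…,m}}, with characteristic vectors u_i and v_i in ℝ^V. Let U ⊆ V. Then the characteristic vector of U lies in span_ℝ{u_1, …, u_m, v_1, …, v_m} if and only if there exists I ⊆ {1,…,m} such that U = ⋃_{i∈I} U_i or U = ⋃_{i∈I} V_i. -/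
lemma rect14 (w x y z : ℝ) (hw : w = 0 ∨ w = 1) (hx : x = 0 ∨ x = 1)
    (hy : y = 0 ∨ y = 1) (hz : z = 0 ∨ z = 1) (h : w + z = x + y)
    (h1 : w ≠ x) (h2 : w ≠ y) : False := by
  rcases hw with hw | hw <;> rcases hx with hx | hx <;> rcases hy with hy | hy <;>
    rcases hz with hz | hz <;> subst_vars <;> simp_all <;> linarith

/-- let `m ≥ 2` and `V = {1,…,m} × {1,…,m}` (the vertex set of the
Hamming graph `H(2,m)`).  For `i`, let `U_i = {(i,y)}` and `V_i = {(y,i)}` with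
characteristic vectors `u_i`, `v_i`.  For `U ⊆ V`, the characteristic vector of `U`
lies in `span_ℝ{u_1, …, u_m, v_1, …, v_m}` iff there is `I ⊆ {1,…,m}` such that
`U = ⋃_{i∈I} U_i` or `U = ⋃_{i∈I} V_i`. -/
theorem stmt14 (m : ℕ) (hm : 2 ≤ m) (U : Set (Fin m × Fin m)) :
    (Set.indicator U (fun _ => (1 : ℝ)) ∈
        Submodule.span ℝ
          ((Set.range fun i : Fin m =>
              (fun p : Fin m × Fin m => if p.1 = i then (1 : ℝ) else 0)) ∪
           (Set.range fun i : Fin m =>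
              (fun p : Fin m × Fin m => if p.2 = i then (1 : ℝ) else 0)))) ↔
      (∃ I : Set (Fin m),
        U = {p : Fin m × Fin m | p.1 ∈ I} ∨ U = {p : Fin m × Fin m | p.2 ∈ I}) := by
  classical
  have hne : Nonempty (Fin m) := ⟨⟨0, by omega⟩⟩
  obtain ⟨z0⟩ := hne
  set f := Set.indicator U (fun _ => (1 : ℝ)) with hfdef
  have h01 : ∀ p, f p = 0 ∨ f p = 1 := by
    intro p
    by_cases hp : p ∈ U <;> simp [hfdef, Set.indicator_apply, hp]
  have hmemf : ∀ p, p ∈ U ↔ f p = 1 := by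
    intro p
    by_cases hp : p ∈ U <;> simp [hfdef, Set.indicator_apply, hp]
  constructor
  · intro hmem
    obtain ⟨a, b, hab⟩ : ∃ a b : Fin m → ℝ, ∀ p, f p = a p.1 + b p.2 := by
      let L : ((Fin m → ℝ) × (Fin m → ℝ)) →ₗ[ℝ] (Fin m × Fin m → ℝ) :=
        { toFun := fun ab p => ab.1 p.1 + ab.2 p.2
          map_add' := by intro x y; funext p; simp; ring
          map_smul' := by intro c x; funext p; simp; ring }
      have hle : Submodule.span ℝ
          ((Set.range fun i : Fin m =>
              (fun p : Fin m × Fin m => if p.1 = i then (1 : ℝ) else 0)) ∪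
           (Set.range fun i : Fin m =>
              (fun p : Fin m × Fin m => if p.2 = i then (1 : ℝ) else 0)))
          ≤ LinearMap.range L := by
        rw [Submodule.span_le]
        rintro g (⟨i, rfl⟩ | ⟨i, rfl⟩)
        · exact ⟨⟨fun j => if j = i then 1 else 0, 0⟩, by funext p; simp [L]⟩
        · exact ⟨⟨0, fun j => if j = i then 1 else 0⟩, by funext p; simp [L]⟩
      obtain ⟨⟨a, b⟩, h⟩ := hle hmem
      exact ⟨a, b, fun p => by rw [← h]; rfl⟩
    by_cases hb : ∀ j j' : Fin m, b j = b j'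
    · refine ⟨{i | (i, z0) ∈ U}, Or.inl ?_⟩
      ext p
      have : f p = f (p.1, z0) := by rw [hab, hab]; simp [hb p.2 z0]
      simp only [Set.mem_setOf_eq]
      rw [hmemf, hmemf, this]
    · push_neg at hb
      obtain ⟨j, j', hjj⟩ := hb
      have ha : ∀ i i' : Fin m, a i = a i' := by
        intro i i'
        by_contra hii
        refine rect14 (f (i, j)) (f (i, j')) (f (i', j)) (f (i', j'))
          (h01 _) (h01 _) (h01 _) (h01 _) ?_ ?_ ?_
        · rw [hab, hab, hab, hab]; ring
        · rw [hab, hab]; simp only []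
          intro h; exact hjj (by linarith [add_left_cancel h])
        · rw [hab, hab]
          intro h; exact hii (by linarith [add_right_cancel h])
      refine ⟨{k | (z0, k) ∈ U}, Or.inr ?_⟩
      ext p
      have : f p = f (z0, p.2) := by rw [hab, hab]; simp [ha p.1 z0]
      simp only [Set.mem_setOf_eq]
      rw [hmemf, hmemf, this]
  · rintro ⟨I, hU | hU⟩ <;> subst hU
    · have heq : f = ∑ i ∈ Finset.univ.filter (· ∈ I),
          (fun p : Fin m × Fin m => if p.1 = i then (1 : ℝ) else 0) := by
        funext p
        rw [Finset.sum_apply]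
        rw [Finset.sum_ite_eq]
        by_cases hp : p.1 ∈ I <;>
          simp [hfdef, Set.indicator_apply, hp]
      rw [hfdef.trans heq]
      refine Submodule.sum_mem _ fun i _ => Submodule.subset_span ?_
      exact Or.inl ⟨i, rfl⟩
    · have heq : f = ∑ i ∈ Finset.univ.filter (· ∈ I),
          (fun p : Fin m × Fin m => if p.2 = i then (1 : ℝ) else 0) := by
        funext p
        rw [Finset.sum_apply]
        rw [Finset.sum_ite_eq]
        by_cases hp : p.2 ∈ I <;>
          simp [hfdef, Set.indicator_apply, hp]
      rw [hfdef.trans heq]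
      refine Submodule.sum_mem _ fun i _ => Submodule.subset_span ?_
      exact Or.inr ⟨i, rfl⟩
end

section
/- Let m = 8 and let G = J(8,2) be the Johnson graph with vertex set V of size 28. For every subset U ⊆ V, let D' = A' + 2Ā' be the dissimilarity matrix with distances a = 1, b = 2 of the graph obtained from G by Seidel switching with respect to U. Then for every ℓ ∈ ℝ^V with ℓᵀ j = 1, the signature of F_{D'}(ℓ) is (7, 0); that is, every graph in the switching class of J(8,2) has a representation as a 2-distance set of 28 points in Euclidean space ℝ^7. -/
open Matrix

/-- The adjacency matrix of the Johnson graph `J(m,2)`: vertices are the 2-element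
subsets of `{1,…,m}`, two vertices adjacent iff they meet in exactly one point. -/
noncomputable def johnsonA (m : ℕ) :
    Matrix {S : Finset (Fin m) // S.card = 2} {S : Finset (Fin m) // S.card = 2} ℝ :=
  Matrix.of fun S T => if (S.1 ∩ T.1).card = 1 then 1 else 0

open Matrix Finset

namespace Stmt18Aux

abbrev V8 := {S : Finset (Fin 8) // S.card = 2}

def hadZ (r i : Fin 8) : ℤ :=
  (if r.val &&& i.val &&& 1 ≠ 0 then -1 else 1) * (if r.val &&& i.val &&& 2 ≠ 0 then -1 else 1) *
    (if r.val &&& i.val &&& 4 ≠ 0 then -1 else 1)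

lemma card_V8 : Fintype.card V8 = 28 := by decide

lemma had_orth : ∀ i j : Fin 8,
    (∑ k : Fin 7, hadZ k.succ i * hadZ k.succ j) = if i = j then 7 else -1 := by decide

lemma had_orth2 : ∀ k l : Fin 7,
    (∑ i : Fin 8, hadZ k.succ i * hadZ l.succ i) = if k = l then 8 else 0 := by decide

lemma had_rowsum : ∀ k : Fin 7, (∑ i : Fin 8, hadZ k.succ i) = 0 := by decide

lemma count7 : ∀ i : Fin 8, (Finset.univ.filter fun S : V8 => i ∈ S.1).card = 7 := by decide

lemma count_pair : ∀ i j : Fin 8,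
    (Finset.univ.filter fun S : V8 => i ∈ S.1 ∧ j ∈ S.1).card = if i = j then 7 else 1 := by decide

lemma count_triple : ∀ i k l : Fin 8,
    (Finset.univ.filter fun S : V8 => i ∈ S.1 ∧ k ∈ S.1 ∧ l ∈ S.1).card =
      (if k = i then 1 else 0) + (if l = i then 1 else 0) + (if k = l then 1 else 0) +
        (if k = i ∧ l = i then 4 else 0) := by decide

noncomputable def Nmat : Matrix V8 (Fin 8) ℝ := Matrix.of fun S i => if i ∈ S.1 then 1 else 0

noncomputable def H7 : Matrix (Fin 7) (Fin 8) ℝ := Matrix.of fun k i => ((hadZ k.succ i : ℤ) : ℝ)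

noncomputable def Km : Matrix (Fin 7) V8 ℝ := H7 * Nmatᵀ

lemma inter_card_le (S T : V8) : (S.1 ∩ T.1).card ≤ 2 :=
  le_trans (Finset.card_le_card (Finset.inter_subset_left)) (le_of_eq S.2)

lemma inter_card_eq_two_iff (S T : V8) : (S.1 ∩ T.1).card = 2 ↔ S = T := by
  constructor
  · intro h
    have h1 : S.1 ∩ T.1 = S.1 := Finset.eq_of_subset_of_card_le Finset.inter_subset_left
      (by rw [h, S.2])
    have h2 : S.1 ⊆ T.1 := by rw [← h1]; exact Finset.inter_subset_right
    exact Subtype.ext (Finset.eq_of_subset_of_card_le h2 (by rw [S.2, T.2]))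
  · rintro rfl; rw [Finset.inter_self, S.2]

lemma NNT : Nmat * Nmatᵀ = johnsonA 8 + 2 • (1 : Matrix V8 V8 ℝ) := by
  ext S T
  have : ∀ i : Fin 8, Nmat S i * Nmatᵀ i T = if i ∈ S.1 ∧ i ∈ T.1 then (1:ℝ) else 0 := by
    intro i; simp only [Nmat, transpose_apply, of_apply]; split_ifs with h1 h2 h3 <;>
      simp_all
  rw [Matrix.mul_apply]
  simp only [this, Finset.sum_boole]
  have hcard : (Finset.univ.filter fun i : Fin 8 => i ∈ S.1 ∧ i ∈ T.1).card = (S.1 ∩ T.1).card := by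
    congr 1; ext i; simp [Finset.mem_inter]
  rw [hcard]
  simp only [Matrix.add_apply, Matrix.smul_apply, Matrix.one_apply, johnsonA, of_apply,
    smul_eq_mul]
  have h2 := inter_card_le S T
  have h22 := inter_card_eq_two_iff S T
  rcases (show (S.1 ∩ T.1).card = 0 ∨ (S.1 ∩ T.1).card = 1 ∨ (S.1 ∩ T.1).card = 2 by omega) with
    h | h | h
  · rw [h]
    have : ¬ S = T := fun he => by rw [he] at h; rw [Finset.inter_self, T.2] at h; omega
    simp [h, this]
  · rw [h]
    have : ¬ S = T := fun he => by rw [he] at h; rw [Finset.inter_self, T.2] at h; omega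
    simp [h, this]
  · rw [h]
    have : S = T := h22.mp h
    simp [h, this]

lemma NTN : Nmatᵀ * Nmat = 6 • (1 : Matrix (Fin 8) (Fin 8) ℝ) + Jmat (Fin 8) := by
  ext i j
  have : ∀ S : V8, Nmatᵀ i S * Nmat S j = if i ∈ S.1 ∧ j ∈ S.1 then (1:ℝ) else 0 := by
    intro S; simp only [Nmat, transpose_apply, of_apply]; split_ifs <;> simp_all
  rw [Matrix.mul_apply]
  simp only [this, Finset.sum_boole, count_pair i j]
  simp only [Matrix.add_apply, Matrix.smul_apply, Matrix.one_apply, Jmat, of_apply, smul_eq_mul]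
  split_ifs <;> norm_num

lemma H7TH7 : H7ᵀ * H7 = 8 • (1 : Matrix (Fin 8) (Fin 8) ℝ) - Jmat (Fin 8) := by
  ext i j
  rw [Matrix.mul_apply]
  have : ∀ k : Fin 7, H7ᵀ i k * H7 k j = ((hadZ k.succ i * hadZ k.succ j : ℤ) : ℝ) := by
    intro k; simp [H7]
  simp only [this]
  rw [← Int.cast_sum, had_orth i j]
  simp only [Matrix.sub_apply, Matrix.smul_apply, Matrix.one_apply, Jmat, of_apply, smul_eq_mul]
  split_ifs <;> norm_num

lemma H7H7T : H7 * H7ᵀ = 8 • (1 : Matrix (Fin 7) (Fin 7) ℝ) := by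
  ext k l
  rw [Matrix.mul_apply]
  have : ∀ i : Fin 8, H7 k i * H7ᵀ i l = ((hadZ k.succ i * hadZ l.succ i : ℤ) : ℝ) := by
    intro i; simp [H7]
  simp only [this]
  rw [← Int.cast_sum, had_orth2 k l]
  simp only [Matrix.smul_apply, Matrix.one_apply, smul_eq_mul]
  split_ifs <;> norm_num

lemma H7J8 : H7 * Jmat (Fin 8) = 0 := by
  ext k j
  rw [Matrix.mul_apply]
  have : ∀ i : Fin 8, H7 k i * Jmat (Fin 8) i j = ((hadZ k.succ i : ℤ) : ℝ) := by
    intro i; simp [H7, Jmat]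
  simp only [this]
  rw [← Int.cast_sum, had_rowsum k]
  simp

lemma NJ8NT : Nmat * Jmat (Fin 8) * Nmatᵀ = 4 • Jmat V8 := by
  have h1 : Nmat * Jmat (Fin 8) = Matrix.of fun (_ : V8) (_ : Fin 8) => (2:ℝ) := by
    ext S j
    rw [Matrix.mul_apply]
    have : ∀ i : Fin 8, Nmat S i * Jmat (Fin 8) i j = if i ∈ S.1 then (1:ℝ) else 0 := by
      intro i; simp only [Nmat, Jmat, of_apply]; split_ifs <;> norm_num
    simp only [this, Finset.sum_boole, Finset.filter_univ_mem, S.2, of_apply]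
    norm_num
  rw [h1]
  ext S T
  rw [Matrix.mul_apply]
  have : ∀ i : Fin 8, (Matrix.of fun (_ : V8) (_ : Fin 8) => (2:ℝ)) S i * Nmatᵀ i T =
      if i ∈ T.1 then (2:ℝ) else 0 := by
    intro i; simp only [Nmat, transpose_apply, of_apply]; split_ifs <;> norm_num
  simp only [this]
  rw [Finset.sum_ite_mem, Finset.univ_inter, Finset.sum_const, T.2]
  simp [Jmat]
  norm_num

lemma KTK : Kmᵀ * Km = (8:ℝ) • johnsonA 8 + (16:ℝ) • (1 : Matrix V8 V8 ℝ) - (4:ℝ) • Jmat V8 := by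
  have hstep : Kmᵀ * Km = Nmat * ((H7ᵀ * H7) * Nmatᵀ) := by
    rw [Km, transpose_mul, transpose_transpose]
    simp only [Matrix.mul_assoc]
  have hNJ : Nmat * (Jmat (Fin 8) * Nmatᵀ) = (4:ℝ) • Jmat V8 := by
    rw [← Matrix.mul_assoc]
    have := NJ8NT
    rw [this]; module
  rw [hstep, H7TH7, Matrix.sub_mul, Matrix.mul_sub, Matrix.smul_mul, Matrix.one_mul,
    Matrix.mul_smul, ← Matrix.mul_assoc, NNT, NJ8NT]
  module

lemma KKT : Km * Kmᵀ = (48:ℝ) • (1 : Matrix (Fin 7) (Fin 7) ℝ) := by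
  have hstep : Km * Kmᵀ = H7 * ((Nmatᵀ * Nmat) * H7ᵀ) := by
    rw [Km, transpose_mul, transpose_transpose]
    simp only [Matrix.mul_assoc]
  have hJH : H7 * (Jmat (Fin 8) * H7ᵀ) = 0 := by
    rw [← Matrix.mul_assoc, H7J8, Matrix.zero_mul]
  rw [hstep, NTN, Matrix.add_mul, Matrix.mul_add, Matrix.smul_mul, Matrix.one_mul,
    Matrix.mul_smul, ← Matrix.mul_assoc, H7H7T, H7J8, Matrix.zero_mul, add_zero]
  module

noncomputable def Pm : Matrix V8 V8 ℝ := (48:ℝ)⁻¹ • (Kmᵀ * Km)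

lemma Pm_eq : (12:ℝ) • Pm = (2:ℝ) • johnsonA 8 - Jmat V8 + (4:ℝ) • (1 : Matrix V8 V8 ℝ) := by
  rw [Pm, KTK, smul_smul]
  norm_num
  module

lemma Pm_symm : Pmᵀ = Pm := by
  rw [Pm, transpose_smul, transpose_mul, transpose_transpose]

lemma Pm_idem : Pm * Pm = Pm := by
  rw [Pm]
  rw [Matrix.smul_mul, Matrix.mul_smul, smul_smul]
  have hstep : (Kmᵀ * Km) * (Kmᵀ * Km) = Kmᵀ * ((Km * Kmᵀ) * Km) := by
    simp only [Matrix.mul_assoc]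
  rw [hstep, KKT, Matrix.smul_mul, Matrix.mul_smul, smul_smul]
  norm_num

end Stmt18Aux


namespace Stmt18Aux

lemma IUIU (U : Finset V8) : switchMat U * switchMat U = 1 := by
  rw [switchMat, diagonal_mul_diagonal]
  have h : (fun v : V8 => (if v ∈ U then (-1:ℝ) else 1) * (if v ∈ U then -1 else 1)) =
      fun _ => (1:ℝ) := by funext v; split_ifs <;> norm_num
  rw [h, diagonal_one]

lemma IUT (U : Finset V8) : (switchMat U)ᵀ = switchMat U := by
  rw [switchMat, diagonal_transpose]

lemma key (U : Finset V8) :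
    ¬ ((switchMat U * Pm * switchMat U) *ᵥ (fun _ => (1:ℝ)) = fun _ => 1) := by
  intro hQj
  set ε : V8 → ℝ := fun S => if S ∈ U then -1 else 1 with hεdef
  have hε2 : ∀ S, ε S ^ 2 = 1 := by
    intro S; simp only [hεdef]; split_ifs <;> norm_num
  have hIUj : switchMat U *ᵥ (fun _ => (1:ℝ)) = ε := by
    funext S; simp [switchMat, mulVec_diagonal, hεdef]
  have hPε : Pm *ᵥ ε = ε := by
    have h1 : switchMat U *ᵥ (Pm *ᵥ ε) = fun _ => (1:ℝ) := by
      calc switchMat U *ᵥ (Pm *ᵥ ε)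
          = switchMat U *ᵥ (Pm *ᵥ (switchMat U *ᵥ fun _ => 1)) := by rw [hIUj]
        _ = (switchMat U * Pm * switchMat U) *ᵥ (fun _ => 1) := by
            rw [mulVec_mulVec, mulVec_mulVec]
        _ = fun _ => 1 := hQj
    have h2 := congrArg (fun v => switchMat U *ᵥ v) h1
    rwa [mulVec_mulVec, IUIU U, one_mulVec, hIUj] at h2
  have h12P : ∀ S T : V8, (12:ℝ) * Pm S T =
      2 * (if (S.1 ∩ T.1).card = 1 then 1 else 0) - 1 + 4 * (if S = T then 1 else 0) := by
    intro S T
    have h := congrFun (congrFun Pm_eq S) T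
    simp only [Matrix.smul_apply, Matrix.add_apply, Matrix.sub_apply, Matrix.one_apply,
      Jmat, johnsonA, Matrix.of_apply, smul_eq_mul] at h
    rw [h]
    try ring
  set g : Fin 8 → ℝ := fun i => ∑ S : V8, (if i ∈ S.1 then ε S else 0) with hgdef
  set s : ℝ := ∑ S : V8, ε S with hsdef
  have hrowA : ∀ S : V8,
      ∑ T : V8, (if (S.1 ∩ T.1).card = 1 then (1:ℝ) else 0) * ε T = 4 * ε S + s / 2 := by
    intro S
    have h0 : (12:ℝ) * ((Pm *ᵥ ε) S) = 12 * ε S := by rw [hPε]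
    have hmv : (Pm *ᵥ ε) S = ∑ T : V8, Pm S T * ε T := by
      simp [Matrix.mulVec, dotProduct]
    rw [hmv, Finset.mul_sum] at h0
    have e1 : ∀ T : V8, (12:ℝ) * (Pm S T * ε T) =
        2 * ((if (S.1 ∩ T.1).card = 1 then (1:ℝ) else 0) * ε T) - ε T
          + (if S = T then 4 * ε T else 0) := by
      intro T
      have := h12P S T
      have h2 : (12:ℝ) * (Pm S T * ε T) = ((12:ℝ) * Pm S T) * ε T := by ring
      rw [h2, this]
      split_ifs <;> ring
    rw [Finset.sum_congr rfl fun T _ => e1 T] at h0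
    rw [Finset.sum_add_distrib, Finset.sum_sub_distrib, ← Finset.mul_sum, ← hsdef,
      Finset.sum_ite_eq] at h0
    simp only [Finset.mem_univ, if_true] at h0
    linarith
  have hcard_sum : ∀ S T : V8,
      ∑ i ∈ S.1, (if i ∈ T.1 then (1:ℝ) else 0) = ((S.1 ∩ T.1).card : ℝ) := by
    intro S T; rw [Finset.sum_ite_mem]; simp
  have hg_row : ∀ S : V8, ∑ i ∈ S.1, g i = ∑ T : V8, ((S.1 ∩ T.1).card : ℝ) * ε T := by
    intro S
    simp only [hgdef]
    rw [Finset.sum_comm]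
    refine Finset.sum_congr rfl fun T _ => ?_
    have h1 : ∀ i, (if i ∈ T.1 then ε T else 0) = (if i ∈ T.1 then (1:ℝ) else 0) * ε T := by
      intro i; split_ifs <;> ring
    simp only [h1]
    rw [← Finset.sum_mul, hcard_sum S T]
  have hcT : ∀ S T : V8, ((S.1 ∩ T.1).card : ℝ) * ε T =
      (if (S.1 ∩ T.1).card = 1 then (1:ℝ) else 0) * ε T + (if S = T then 2 * ε T else 0) := by
    intro S T
    have h2 := inter_card_le S T
    have h22 := inter_card_eq_two_iff S T
    rcases (show (S.1 ∩ T.1).card = 0 ∨ (S.1 ∩ T.1).card = 1 ∨ (S.1 ∩ T.1).card = 2 by omega)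
      with h | h | h
    · have hne : ¬ S = T := fun he => by rw [h22.mpr he] at h; omega
      rw [h]; simp [hne]
    · have hne : ¬ S = T := fun he => by rw [h22.mpr he] at h; omega
      rw [h]; simp [hne]
    · have heq : S = T := h22.mp h
      rw [h, if_neg (by omega), if_pos heq]
      push_cast; ring
  have hrow : ∀ S : V8, ∑ i ∈ S.1, g i = 6 * ε S + s / 2 := by
    intro S
    rw [hg_row S, Finset.sum_congr rfl fun T _ => hcT S T, Finset.sum_add_distrib,
      hrowA S, Finset.sum_ite_eq]
    simp only [Finset.mem_univ, if_true]
    ring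
  have hGsum : ∑ i : Fin 8, g i = 2 * s := by
    simp only [hgdef]
    rw [Finset.sum_comm]
    have h1 : ∀ S : V8, ∑ i : Fin 8, (if i ∈ S.1 then ε S else 0) = 2 * ε S := by
      intro S
      rw [Finset.sum_ite_mem, Finset.univ_inter, Finset.sum_const, S.2]
      push_cast; ring
    rw [Finset.sum_congr rfl fun S _ => h1 S, ← Finset.mul_sum, ← hsdef]
  have hs0 : s = 0 := by
    have hL : ∑ S : V8, (∑ i ∈ S.1, g i) = 14 * s := by
      have h1 : ∀ S : V8, ∑ i ∈ S.1, g i = ∑ i : Fin 8, (if i ∈ S.1 then g i else 0) := by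
        intro S; rw [Finset.sum_ite_mem, Finset.univ_inter]
      rw [Finset.sum_congr rfl fun S _ => h1 S, Finset.sum_comm]
      have h2 : ∀ i : Fin 8, ∑ S : V8, (if i ∈ S.1 then g i else 0) = 7 * g i := by
        intro i
        have h3 : ∀ S : V8, (if i ∈ S.1 then g i else 0) = (if i ∈ S.1 then (1:ℝ) else 0) * g i := by
          intro S; split_ifs <;> ring
        rw [Finset.sum_congr rfl fun S _ => h3 S, ← Finset.sum_mul, Finset.sum_boole, count7 i]
        norm_num
      rw [Finset.sum_congr rfl fun i _ => h2 i, ← Finset.mul_sum, hGsum]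
      ring
    have hR : ∑ S : V8, (6 * ε S + s / 2) = 6 * s + 14 * s := by
      rw [Finset.sum_add_distrib, ← Finset.mul_sum, ← hsdef, Finset.sum_const,
        Finset.card_univ, card_V8]
      push_cast; ring
    have heq : ∑ S : V8, ∑ i ∈ S.1, g i = ∑ S : V8, (6 * ε S + s / 2) :=
      Finset.sum_congr rfl fun (S : V8) _ => hrow S
    rw [hL, hR] at heq
    linarith
  have hsq : ∀ S : V8, (∑ i ∈ S.1, g i)^2 = 36 := by
    intro S
    rw [hrow S, hs0]
    have : 6 * ε S + 0 / 2 = 6 * ε S := by ring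
    rw [this, mul_pow, hε2 S]
    norm_num
  set T2 : ℝ := ∑ i : Fin 8, (g i)^2 with hT2
  have hquad : ∀ i : Fin 8, 4 * (g i)^2 + T2 = 252 := by
    intro i
    have hA : ∑ S : V8, (if i ∈ S.1 then (1:ℝ) else 0) * (∑ k ∈ S.1, g k)^2 = 252 := by
      have h1 : ∀ S : V8, (if i ∈ S.1 then (1:ℝ) else 0) * (∑ k ∈ S.1, g k)^2 =
          (if i ∈ S.1 then (1:ℝ) else 0) * 36 := by intro S; rw [hsq S]
      rw [Finset.sum_congr rfl fun S _ => h1 S, ← Finset.sum_mul, Finset.sum_boole, count7 i]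
      norm_num
    have hconv : ∀ S : V8, (∑ k ∈ S.1, g k) = ∑ k : Fin 8, (if k ∈ S.1 then (1:ℝ) else 0) * g k := by
      intro S
      simp only [ite_mul, one_mul, zero_mul]
      rw [Finset.sum_ite_mem, Finset.univ_inter]
    have hcount : ∀ k l : Fin 8, ∑ S : V8, (if i ∈ S.1 ∧ k ∈ S.1 ∧ l ∈ S.1 then (1:ℝ) else 0) =
        (if k = i then (1:ℝ) else 0) + (if l = i then 1 else 0) + (if k = l then 1 else 0) +
          (if k = i ∧ l = i then 4 else 0) := by
      intro k l
      rw [Finset.sum_boole, count_triple i k l]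
      push_cast [apply_ite ((↑·) : ℕ → ℝ)]
      norm_num
    have E1 : ∑ k : Fin 8, ∑ l : Fin 8, (if k = i then (1:ℝ) else 0) * (g k * g l) =
        g i * ∑ l : Fin 8, g l := by
      rw [Finset.sum_comm, Finset.mul_sum]
      refine Finset.sum_congr rfl fun l _ => ?_
      have h3 : ∀ k, (if k = i then (1:ℝ) else 0) * (g k * g l) =
          if k = i then g k * g l else 0 := fun k => by split_ifs <;> ring
      rw [Finset.sum_congr rfl fun k _ => h3 k]
      simp
    have E2 : ∑ k : Fin 8, ∑ l : Fin 8, (if l = i then (1:ℝ) else 0) * (g k * g l) =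
        (∑ k : Fin 8, g k) * g i := by
      rw [Finset.sum_mul]
      refine Finset.sum_congr rfl fun k _ => ?_
      have h3 : ∀ l, (if l = i then (1:ℝ) else 0) * (g k * g l) =
          if l = i then g k * g l else 0 := fun l => by split_ifs <;> ring
      rw [Finset.sum_congr rfl fun l _ => h3 l]
      simp
    have E3 : ∑ k : Fin 8, ∑ l : Fin 8, (if k = l then (1:ℝ) else 0) * (g k * g l) =
        ∑ k : Fin 8, (g k)^2 := by
      refine Finset.sum_congr rfl fun k _ => ?_
      have h3 : ∀ l, (if k = l then (1:ℝ) else 0) * (g k * g l) =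
          if k = l then g k * g l else 0 := fun l => by split_ifs <;> ring
      rw [Finset.sum_congr rfl fun l _ => h3 l]
      simp [sq]
    have E4 : ∑ k : Fin 8, ∑ l : Fin 8, (if k = i ∧ l = i then (4:ℝ) else 0) * (g k * g l) =
        4 * (g i)^2 := by
      have h3 : ∀ k l, (if k = i ∧ l = i then (4:ℝ) else 0) * (g k * g l) =
          if k = i then (if l = i then 4 * (g k * g l) else 0) else 0 := by
        intro k l
        by_cases h1 : k = i <;> by_cases h2 : l = i <;> simp [h1, h2] <;> ring
      rw [Finset.sum_congr rfl fun k _ => Finset.sum_congr rfl fun l _ => h3 k l]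
      simp [sq]
      try ring
    have hB : ∑ S : V8, (if i ∈ S.1 then (1:ℝ) else 0) * (∑ k ∈ S.1, g k)^2 =
        4 * (g i)^2 + T2 + 2 * (g i) * (∑ k : Fin 8, g k) := by
      have h1 : ∀ S : V8, (if i ∈ S.1 then (1:ℝ) else 0) * (∑ k ∈ S.1, g k)^2 =
          ∑ k : Fin 8, ∑ l : Fin 8,
            (if i ∈ S.1 ∧ k ∈ S.1 ∧ l ∈ S.1 then (1:ℝ) else 0) * (g k * g l) := by
        intro S
        rw [hconv S, sq, Finset.sum_mul_sum, Finset.mul_sum]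
        refine Finset.sum_congr rfl fun k _ => ?_
        rw [Finset.mul_sum]
        refine Finset.sum_congr rfl fun l _ => ?_
        by_cases h1 : i ∈ S.1 <;> by_cases h2 : k ∈ S.1 <;> by_cases h3 : l ∈ S.1 <;>
          simp [h1, h2, h3]
      rw [Finset.sum_congr rfl fun S _ => h1 S, Finset.sum_comm]
      rw [Finset.sum_congr rfl fun (k : Fin 8) _ => (Finset.sum_comm : (∑ S : V8, ∑ l : Fin 8, _) = _)]
      have h2 : ∀ k l : Fin 8, ∑ S : V8,
          (if i ∈ S.1 ∧ k ∈ S.1 ∧ l ∈ S.1 then (1:ℝ) else 0) * (g k * g l) =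
          ((if k = i then (1:ℝ) else 0) + (if l = i then 1 else 0) + (if k = l then 1 else 0) +
            (if k = i ∧ l = i then 4 else 0)) * (g k * g l) := by
        intro k l
        rw [← Finset.sum_mul, hcount k l]
      rw [Finset.sum_congr rfl fun (k : Fin 8) _ => Finset.sum_congr rfl fun (l : Fin 8) _ => h2 k l]
      have h4 : ∀ k l : Fin 8, ((if k = i then (1:ℝ) else 0) + (if l = i then 1 else 0) +
          (if k = l then 1 else 0) + (if k = i ∧ l = i then 4 else 0)) * (g k * g l) =
          (if k = i then (1:ℝ) else 0) * (g k * g l) + (if l = i then (1:ℝ) else 0) * (g k * g l) +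
          (if k = l then (1:ℝ) else 0) * (g k * g l) +
          (if k = i ∧ l = i then (4:ℝ) else 0) * (g k * g l) := by
        intro k l; ring
      rw [Finset.sum_congr rfl fun (k : Fin 8) _ => Finset.sum_congr rfl fun (l : Fin 8) _ => h4 k l]
      simp only [Finset.sum_add_distrib]
      rw [E1, E2, E3, E4, ← hT2]
      ring
    rw [hB, hGsum, hs0] at hA
    ring_nf at hA
    linarith
  have hTsum : ∑ i : Fin 8, (4 * (g i)^2 + T2) = 8 * 252 := by
    rw [Finset.sum_congr rfl fun i _ => hquad i, Finset.sum_const, Finset.card_univ]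
    simp [Fintype.card_fin]
    try norm_num
  have hT168 : T2 = 168 := by
    have h1 : ∑ i : Fin 8, (4 * (g i)^2 + T2) = 4 * T2 + 8 * T2 := by
      rw [Finset.sum_add_distrib, ← Finset.mul_sum, ← hT2, Finset.sum_const, Finset.card_univ]
      simp [Fintype.card_fin, nsmul_eq_mul]
      try ring
    rw [h1] at hTsum
    linarith
  have hg21 : ∀ i : Fin 8, (g i)^2 = 21 := fun i => by
    have h := hquad i; rw [hT168] at h; linarith
  have hpair : (g 0 + g 1)^2 = 36 := by
    have h1 := hsq ⟨({0,1} : Finset (Fin 8)), by decide⟩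
    rwa [Finset.sum_pair (show (0:Fin 8) ≠ 1 by decide)] at h1
  have h01 : g 0 * g 1 = -3 := by nlinarith [hg21 0, hg21 1, hpair]
  have e : (g 0 * g 1)^2 = 441 := by rw [mul_pow, hg21 0, hg21 1]; norm_num
  rw [h01] at e
  norm_num at e

end Stmt18Aux





namespace Stmt18Aux

lemma rank_smul_eq {m n : Type*} [Fintype n] [Fintype m] [DecidableEq m] {c : ℝ} (hc : c ≠ 0)
    (M : Matrix m n ℝ) : (c • M).rank = M.rank := by
  apply le_antisymm
  · rw [Matrix.smul_eq_diagonal_mul]; exact Matrix.rank_mul_le_right _ _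
  · have h : M = c⁻¹ • (c • M) := by rw [smul_smul, inv_mul_cancel₀ hc, one_smul]
    calc M.rank = (c⁻¹ • (c • M)).rank := by rw [← h]
      _ ≤ (c • M).rank := by
          rw [Matrix.smul_eq_diagonal_mul]; exact Matrix.rank_mul_le_right _ _

lemma rank_eq_of_ker_eq {n : Type*} [Fintype n] [DecidableEq n] (M M' : Matrix n n ℝ)
    (h : LinearMap.ker M.mulVecLin = LinearMap.ker M'.mulVecLin) : M.rank = M'.rank := by
  have h1 := LinearMap.finrank_range_add_finrank_ker M.mulVecLin
  have h2 := LinearMap.finrank_range_add_finrank_ker M'.mulVecLin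
  rw [h] at h1
  unfold Matrix.rank
  omega

lemma rank_Km : Km.rank = 7 := by
  apply le_antisymm
  · exact le_trans (Matrix.rank_le_card_height Km) (by simp)
  · have h1 : (Km * Kmᵀ).rank ≤ Km.rank := Matrix.rank_mul_le_left _ _
    rw [KKT, rank_smul_eq (by norm_num : (48:ℝ) ≠ 0), Matrix.rank_one] at h1
    simpa using h1

lemma rank_Pm : Pm.rank = 7 := by
  rw [Pm, rank_smul_eq (by norm_num : ((48:ℝ)⁻¹) ≠ 0), Matrix.rank_transpose_mul_self, rank_Km]

lemma rank_Q (U : Finset V8) : (switchMat U * Pm * switchMat U).rank = 7 := by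
  apply le_antisymm
  · calc (switchMat U * Pm * switchMat U).rank ≤ (switchMat U * Pm).rank :=
        Matrix.rank_mul_le_left _ _
      _ ≤ Pm.rank := Matrix.rank_mul_le_right _ _
      _ = 7 := rank_Pm
  · have h : Pm = switchMat U * (switchMat U * Pm * switchMat U) * switchMat U := by
      have h1 : switchMat U * (switchMat U * Pm * switchMat U) * switchMat U =
          (switchMat U * switchMat U) * Pm * (switchMat U * switchMat U) := by
        simp only [Matrix.mul_assoc]
      rw [h1, IUIU U, Matrix.one_mul, Matrix.mul_one]
    calc (7:ℕ) = Pm.rank := rank_Pm.symm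
      _ ≤ (switchMat U * (switchMat U * Pm * switchMat U)).rank := by
          conv_lhs => rw [h]
          exact Matrix.rank_mul_le_left _ _
      _ ≤ (switchMat U * Pm * switchMat U).rank := Matrix.rank_mul_le_right _ _

end Stmt18Aux

open Stmt18Aux

/-- let `m = 8` and `G = J(8,2)` the Johnson graph on `28` vertices.
For every `U ⊆ V`, let `D' = A' + 2Ā'` be the dissimilarity matrix (distances `a = 1`,
`b = 2`) of the Seidel switch of `G` with respect to `U`.  Then for every `ℓ` with
`ℓᵀ j = 1`, the signature of `F_{D'}(ℓ)` is `(7, 0)`; that is, every graph in the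
switching class of `J(8,2)` has a representation as a 2-distance set of `28` points
in Euclidean space `ℝ^7`. -/
theorem stmt18
    (U : Finset {S : Finset (Fin 8) // S.card = 2})
    (A' : Matrix {S : Finset (Fin 8) // S.card = 2} {S : Finset (Fin 8) // S.card = 2} ℝ)
    (hA'01 : ∀ S T, A' S T = 0 ∨ A' S T = 1)
    (hA'diag : ∀ S, A' S S = 0) (hA'sym : A'.IsSymm)
    (hA' : A' - (Jmat _ - 1 - A') =
      switchMat U * (johnsonA 8 - (Jmat _ - 1 - johnsonA 8)) * switchMat U)
    (D' : Matrix {S : Finset (Fin 8) // S.card = 2} {S : Finset (Fin 8) // S.card = 2} ℝ)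
    (hD' : D' = A' + (2 : ℝ) • (Jmat _ - 1 - A')) :
    Fintype.card {S : Finset (Fin 8) // S.card = 2} = 28 ∧
    (∀ ℓ, ∑ S, ℓ S = 1 → signature (FMat D' ℓ) = (7, 0)) ∧
    ∃ (x : {S : Finset (Fin 8) // S.card = 2} → (Fin 7 → ℝ)) (α β : ℝ),
      Function.Injective x ∧ α ≠ β ∧
      ∀ S T, S ≠ T →
        (∑ j, (x S j - x T j) ^ 2) = (if A' S T = 1 then α else β) := by
  classical
  -- shared facts
  have hPmeq2 : johnsonA 8 - (Jmat V8 - 1 - johnsonA 8) =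
      (12:ℝ) • Pm - (3:ℝ) • (1 : Matrix V8 V8 ℝ) := by
    rw [Pm_eq]; module
  have hconj : ∀ X : Matrix V8 V8 ℝ, switchMat U * ((12:ℝ) • X - (3:ℝ) • 1) * switchMat U =
      (12:ℝ) • (switchMat U * X * switchMat U) - (3:ℝ) • 1 := by
    intro X
    rw [Matrix.mul_sub, Matrix.sub_mul, Matrix.mul_smul, Matrix.smul_mul, Matrix.mul_smul,
      Matrix.smul_mul, Matrix.mul_one, IUIU U]
  have hRHS : switchMat U * (johnsonA 8 - (Jmat V8 - 1 - johnsonA 8)) * switchMat U =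
      (12:ℝ) • (switchMat U * Pm * switchMat U) - (3:ℝ) • 1 := by
    rw [hPmeq2, hconj Pm]
  have hA'eq : A' = (6:ℝ) • (switchMat U * Pm * switchMat U) +
      (2⁻¹:ℝ) • Jmat V8 - (2:ℝ) • 1 := by
    have h := hA'
    rw [hRHS] at h
    have h3 : (2:ℝ) • A' = ((12:ℝ) • (switchMat U * Pm * switchMat U) - (3:ℝ) • 1) +
        (Jmat V8 - 1) := by
      rw [← h]; module
    have h4 : A' = (2⁻¹:ℝ) • ((2:ℝ) • A') := by rw [smul_smul]; norm_num
    rw [h4, h3]; module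
  have hD'eq : D' = (3/2:ℝ) • Jmat V8 - (6:ℝ) • (switchMat U * Pm * switchMat U) := by
    rw [hD', hA'eq]; module
  refine ⟨card_V8, ?_, ?_⟩
  · -- part 2
    intro ℓ hl
    set Q : Matrix V8 V8 ℝ := switchMat U * Pm * switchMat U with hQdef
    have hQT : Qᵀ = Q := by
      rw [hQdef, Matrix.transpose_mul, Matrix.transpose_mul, IUT U, Pm_symm,
        ← Matrix.mul_assoc]
    have hQQ : Q * Q = Q := by
      rw [hQdef]
      have h1 : switchMat U * Pm * switchMat U * (switchMat U * Pm * switchMat U) =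
          switchMat U * (Pm * ((switchMat U * switchMat U) * Pm)) * switchMat U := by
        simp only [Matrix.mul_assoc]
      rw [h1, IUIU U, Matrix.one_mul, Pm_idem]
    set B : Matrix V8 V8 ℝ := 1 - vecMulVec (fun _ => 1) ℓ with hBdef
    have hBJ : B * Jmat V8 = 0 := by
      ext S T
      rw [Matrix.mul_apply]
      have h1 : ∀ W : V8, B S W * Jmat V8 W T = (if S = W then 1 else 0) - ℓ W := by
        intro W
        simp [hBdef, Matrix.sub_apply, Matrix.one_apply, vecMulVec_apply, Jmat]
      rw [Finset.sum_congr rfl fun W _ => h1 W, Finset.sum_sub_distrib, Finset.sum_ite_eq, hl]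
      simp
    have hBT : (1 : Matrix V8 V8 ℝ) - vecMulVec ℓ (fun _ => 1) = Bᵀ := by
      rw [hBdef, Matrix.transpose_sub, Matrix.transpose_one]
      congr 1
      ext i j
      simp [vecMulVec_apply, Matrix.transpose_apply]
    have hFeq : FMat D' ℓ = (6:ℝ) • (B * Q * Bᵀ) := by
      rw [FMat, hBT, hD'eq]
      have h1 : B * ((3/2:ℝ) • Jmat V8 - (6:ℝ) • Q) * Bᵀ =
          (3/2:ℝ) • (B * Jmat V8 * Bᵀ) - (6:ℝ) • (B * Q * Bᵀ) := by
        rw [Matrix.mul_sub, Matrix.sub_mul, Matrix.mul_smul, Matrix.smul_mul,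
          Matrix.mul_smul, Matrix.smul_mul]
      rw [h1, hBJ, Matrix.zero_mul, smul_zero, zero_sub, neg_neg]
    set C : Matrix V8 V8 ℝ := Real.sqrt 6 • (B * Q) with hCdef
    have hFC : FMat D' ℓ = C * Cᵀ := by
      rw [hFeq, hCdef, Matrix.transpose_smul, Matrix.smul_mul, Matrix.mul_smul, smul_smul,
        Real.mul_self_sqrt (by norm_num : (0:ℝ) ≤ 6)]
      congr 1
      rw [Matrix.transpose_mul, hQT]
      have h2 : B * Q * (Q * Bᵀ) = B * (Q * Q) * Bᵀ := by simp only [Matrix.mul_assoc]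
      rw [h2, hQQ]
    have hpsd : (FMat D' ℓ).PosSemidef := by
      rw [hFC]
      have h := Matrix.posSemidef_self_mul_conjTranspose C
      rwa [Matrix.conjTranspose_eq_transpose_of_trivial] at h
    have hherm : (FMat D' ℓ).IsHermitian := hpsd.1
    -- rank computation
    have hker : LinearMap.ker C.mulVecLin = LinearMap.ker Q.mulVecLin := by
      ext x
      simp only [LinearMap.mem_ker, Matrix.mulVecLin_apply]
      constructor
      · intro hx
        rw [hCdef, Matrix.smul_mulVec, ← Matrix.mulVec_mulVec] at hx
        have hx2 : B *ᵥ (Q *ᵥ x) = 0 := by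
          have h6 : Real.sqrt 6 ≠ 0 := by positivity
          exact (smul_eq_zero.mp hx).resolve_left h6
        set y := Q *ᵥ x with hy
        have hyc : y = (ℓ ⬝ᵥ y) • (fun _ => (1:ℝ)) := by
          have h1 : B *ᵥ y = y - (ℓ ⬝ᵥ y) • (fun _ => (1:ℝ)) := by
            rw [hBdef, Matrix.sub_mulVec, Matrix.one_mulVec]
            congr 1
            funext i
            simp [Matrix.mulVec, vecMulVec_apply, dotProduct]
          rw [h1] at hx2
          exact sub_eq_zero.mp hx2
        have hQy : Q *ᵥ y = y := by rw [hy, Matrix.mulVec_mulVec, hQQ]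
        have hc0 : ℓ ⬝ᵥ y = 0 := by
          by_contra hc
          apply key U
          have h2 : Q *ᵥ ((ℓ ⬝ᵥ y) • (fun _ => (1:ℝ))) = (ℓ ⬝ᵥ y) • (fun _ => (1:ℝ)) := by
            rw [← hyc]; exact hQy
          rw [Matrix.mulVec_smul] at h2
          exact smul_right_injective (V8 → ℝ) hc h2
        rw [hyc, hc0, zero_smul]
      · intro hx
        rw [hCdef, Matrix.smul_mulVec, ← Matrix.mulVec_mulVec, hx,
          Matrix.mulVec_zero, smul_zero]
    have hrank : (FMat D' ℓ).rank = 7 := by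
      rw [hFC, Matrix.rank_self_mul_transpose, rank_eq_of_ker_eq C Q hker, hQdef, rank_Q U]
    -- signature
    rw [signature, Prod.mk.injEq]
    constructor
    · rw [sigP, dif_pos hherm, Nat.card_eq_fintype_card]
      have hcongr : Fintype.card {i // 0 < hherm.eigenvalues i} =
          Fintype.card {i // hherm.eigenvalues i ≠ 0} := by
        apply Fintype.card_congr
        apply Equiv.subtypeEquivRight
        intro i
        constructor
        · exact fun h => h.ne'
        · intro h
          exact lt_of_le_of_ne (hpsd.eigenvalues_nonneg i) (Ne.symm h)
      rw [hcongr, ← Matrix.IsHermitian.rank_eq_card_non_zero_eigs, hrank]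
    · rw [sigN, dif_pos hherm]
      have : IsEmpty {i // hherm.eigenvalues i < 0} := by
        constructor
        rintro ⟨i, hi⟩
        exact absurd hi (not_lt.mpr (hpsd.eigenvalues_nonneg i))
      simp [Nat.card_of_isEmpty]
  · -- part 3: explicit 2-distance representation
    set ε : V8 → ℝ := fun S => if S ∈ U then -1 else 1 with hεdef
    have hε2 : ∀ S, ε S * ε S = 1 := by
      intro S; simp only [hεdef]; split_ifs <;> norm_num
    have hKent : ∀ S T : V8, ∑ k : Fin 7, Km k S * Km k T =
        8 * (johnsonA 8) S T + (if S = T then (16:ℝ) else 0) - 4 := by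
      intro S T
      have h := congrFun (congrFun KTK S) T
      simp only [Matrix.mul_apply, Matrix.transpose_apply, Matrix.add_apply, Matrix.sub_apply,
        Matrix.smul_apply, Matrix.one_apply, Jmat, Matrix.of_apply, smul_eq_mul] at h
      rw [h]
      split_ifs <;> ring
    have hAdiag : ∀ S : V8, (johnsonA 8) S S = 0 := by
      intro S; simp only [johnsonA, Matrix.of_apply, Finset.inter_self, S.2]; norm_num
    have hrel : ∀ S T : V8, S ≠ T →
        2 * A' S T - 1 = ε S * (2 * (johnsonA 8) S T - 1) * ε T := by
      intro S T hST
      have h := congrFun (congrFun hA' S) T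
      rw [switchMat, Matrix.mul_diagonal, Matrix.diagonal_mul] at h
      simp only [Matrix.sub_apply, Matrix.one_apply, Jmat, Matrix.of_apply, if_neg hST] at h
      simp only [hεdef]
      linear_combination h
    have hdist : ∀ S T : V8, S ≠ T →
        (∑ k : Fin 7, (ε S * Km k S / Real.sqrt 48 - ε T * Km k T / Real.sqrt 48)^2) =
          if A' S T = 1 then (1/3 : ℝ) else 2/3 := by
      intro S T hST
      have hsq48 : Real.sqrt 48 ^ 2 = 48 := Real.sq_sqrt (by norm_num)
      have hterm : ∀ k : Fin 7, (ε S * Km k S / Real.sqrt 48 - ε T * Km k T / Real.sqrt 48)^2 =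
          ((Km k S * Km k S) - 2 * (ε S * ε T) * (Km k S * Km k T) + (Km k T * Km k T)) / 48 := by
        intro k
        rw [div_sub_div_same, div_pow, hsq48]
        congr 1
        have hexp : (ε S * Km k S - ε T * Km k T)^2 =
            (ε S * ε S) * (Km k S * Km k S) - 2 * (ε S * ε T) * (Km k S * Km k T) +
              (ε T * ε T) * (Km k T * Km k T) := by ring
        rw [hexp, hε2 S, hε2 T, one_mul, one_mul]
      rw [Finset.sum_congr rfl fun k _ => hterm k, ← Finset.sum_div, Finset.sum_add_distrib,
        Finset.sum_sub_distrib, ← Finset.mul_sum, hKent S S, hKent S T, hKent T T,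
        hAdiag S, hAdiag T, if_pos rfl, if_pos rfl, if_neg hST]
      have hkey := hrel S T hST
      rcases hA'01 S T with h0 | h1
      · rw [if_neg (by rw [h0]; norm_num)]
        rw [h0] at hkey
        linear_combination ((1:ℝ)/6) * hkey
      · rw [if_pos h1]
        rw [h1] at hkey
        linear_combination ((1:ℝ)/6) * hkey
    refine ⟨fun S k => ε S * Km k S / Real.sqrt 48, 1/3, 2/3, ?_, by norm_num,
      fun S T hST => hdist S T hST⟩
    intro S T hxy
    by_contra hne
    have h1 := hdist S T hne
    have h0 : (∑ k : Fin 7, (ε S * Km k S / Real.sqrt 48 - ε T * Km k T / Real.sqrt 48)^2) = 0 := by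
      apply Finset.sum_eq_zero
      intro k _
      have h : ε S * Km k S / Real.sqrt 48 = ε T * Km k T / Real.sqrt 48 := congrFun hxy k
      rw [h]
      ring
    rw [h0] at h1
    split_ifs at h1 <;> norm_num at h1
end
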